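/- arXiv:2407.05252 — 2 statements merged into one kernel-verified Lean document; each statement's English description precedes it below -/
import Mathlib

section
/- The system of equations B₁(x) = 0, B₂(x) = 0 has at most two solutions x in the square [0,1]². -/
open scoped BigOperators

noncomputable def genFun (b : ℕ × ℕ → ℝ) (x : ℝ × ℝ) : ℝ :=
  ∑' j : ℕ × ℕ, b j * x.1 ^ j.1 * x.2 ^ j.2

lemma abs_summable_of_ite (b : ℕ × ℕ → ℝ) (e : ℕ × ℕ)
    (hs : Summable fun j : ℕ × ℕ => if j = e then 0 else b j) :
    Summable fun j : ℕ × ℕ => |b j| := by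
  have h1 : Summable fun j : ℕ × ℕ => |if j = e then 0 else b j| := hs.abs
  have h2 : Summable fun j : ℕ × ℕ => if j = e then |b e| else 0 :=
    summable_of_ne_finset_zero (s := {e}) (by intro j hj; simp at hj; simp [hj])
  refine Summable.of_nonneg_of_le (fun j => abs_nonneg _) ?_ (h1.add h2)
  intro j
  by_cases h : j = e <;> simp [h]

lemma summable_term (b : ℕ × ℕ → ℝ) (hb : Summable fun j : ℕ × ℕ => |b j|)
    (x : ℝ × ℝ) (h01 : 0 ≤ x.1) (h02 : 0 ≤ x.2) (h11 : x.1 ≤ 1) (h12 : x.2 ≤ 1) :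
    Summable fun j : ℕ × ℕ => b j * x.1 ^ j.1 * x.2 ^ j.2 := by
  rw [← summable_abs_iff]
  refine Summable.of_nonneg_of_le (fun j => abs_nonneg _) ?_ hb
  intro j
  rw [abs_mul, abs_mul, abs_of_nonneg (pow_nonneg h01 _), abs_of_nonneg (pow_nonneg h02 _)]
  have g1 : x.1 ^ j.1 ≤ 1 := pow_le_one₀ h01 h11
  have g2 : x.2 ^ j.2 ≤ 1 := pow_le_one₀ h02 h12
  have n1 : (0:ℝ) ≤ x.1 ^ j.1 := pow_nonneg h01 _
  have n2 : (0:ℝ) ≤ x.2 ^ j.2 := pow_nonneg h02 _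
  have hb0 := abs_nonneg (b j)
  have h3 : |b j| * x.1 ^ j.1 ≤ |b j| * 1 := mul_le_mul_of_nonneg_left g1 hb0
  have h4 : |b j| * x.1 ^ j.1 * x.2 ^ j.2 ≤ |b j| * x.1 ^ j.1 * 1 :=
    mul_le_mul_of_nonneg_left g2 (mul_nonneg hb0 n1)
  nlinarith

lemma genFun_one_one (b : ℕ × ℕ → ℝ) (e : ℕ × ℕ)
    (habs : Summable fun j : ℕ × ℕ => |b j|)
    (he : b e = -∑' j : ℕ × ℕ, if j = e then 0 else b j) : genFun b (1, 1) = 0 := by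
  have hsb : Summable b := summable_abs_iff.mp habs
  have h1 : genFun b (1, 1) = ∑' j : ℕ × ℕ, b j := by
    unfold genFun; exact tsum_congr fun j => by simp
  rw [h1, Summable.tsum_eq_add_tsum_ite hsb e, he]
  ring

/-- The Jacobian matrix `(B_{ij}(x))` of the generating functions, with entries
`B_{ij}(x) = ∂B_i(x)/∂x_j` written out as termwise-differentiated series. -/
noncomputable def jacMat (b₁ b₂ : ℕ × ℕ → ℝ) (x : ℝ × ℝ) : Matrix (Fin 2) (Fin 2) ℝ :=
  !![∑' j : ℕ × ℕ, b₁ j * (j.1 : ℝ) * x.1 ^ (j.1 - 1) * x.2 ^ j.2,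
     ∑' j : ℕ × ℕ, b₁ j * (j.2 : ℝ) * x.1 ^ j.1 * x.2 ^ (j.2 - 1);
     ∑' j : ℕ × ℕ, b₂ j * (j.1 : ℝ) * x.1 ^ (j.1 - 1) * x.2 ^ j.2,
     ∑' j : ℕ × ℕ, b₂ j * (j.2 : ℝ) * x.1 ^ j.1 * x.2 ^ (j.2 - 1)]

lemma monomial_conv (a c : ℕ) (x1 x2 z1 z2 θ : ℝ) (hx1 : 0 ≤ x1) (hx2 : 0 ≤ x2)
    (h1 : x1 ≤ z1) (h2 : x2 ≤ z2) (hθ0 : 0 ≤ θ) (hθ1 : θ ≤ 1) :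
    ((1 - θ) * x1 + θ * z1) ^ a * ((1 - θ) * x2 + θ * z2) ^ c ≤
      (1 - θ) * (x1 ^ a * x2 ^ c) + θ * (z1 ^ a * z2 ^ c) := by
  have hz1 : (0:ℝ) ≤ z1 := hx1.trans h1
  have hz2 : (0:ℝ) ≤ z2 := hx2.trans h2
  have hy1 : (0:ℝ) ≤ (1 - θ) * x1 + θ * z1 := by nlinarith
  have hy2 : (0:ℝ) ≤ (1 - θ) * x2 + θ * z2 := by nlinarith
  have hA := (convexOn_pow a).2 (Set.mem_Ici.mpr hx1) (Set.mem_Ici.mpr hz1)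
    (by linarith : (0:ℝ) ≤ 1 - θ) hθ0 (by ring)
  have hB := (convexOn_pow c).2 (Set.mem_Ici.mpr hx2) (Set.mem_Ici.mpr hz2)
    (by linarith : (0:ℝ) ≤ 1 - θ) hθ0 (by ring)
  simp only [smul_eq_mul] at hA hB
  have hA0 : (0:ℝ) ≤ ((1 - θ) * x1 + θ * z1) ^ a := pow_nonneg hy1 _
  have hB0 : (0:ℝ) ≤ ((1 - θ) * x2 + θ * z2) ^ c := pow_nonneg hy2 _
  have hA'0 : (0:ℝ) ≤ (1 - θ) * x1 ^ a + θ * z1 ^ a := hA0.trans hA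
  have step1 : ((1 - θ) * x1 + θ * z1) ^ a * ((1 - θ) * x2 + θ * z2) ^ c ≤
      ((1 - θ) * x1 ^ a + θ * z1 ^ a) * ((1 - θ) * x2 ^ c + θ * z2 ^ c) :=
    mul_le_mul hA hB hB0 hA'0
  have hq : x1 ^ a ≤ z1 ^ a := pow_le_pow_left₀ hx1 h1 a
  have hs : x2 ^ c ≤ z2 ^ c := pow_le_pow_left₀ hx2 h2 c
  have key : (0:ℝ) ≤ θ * (1 - θ) * ((z1 ^ a - x1 ^ a) * (z2 ^ c - x2 ^ c)) := by
    have := mul_nonneg (sub_nonneg.mpr hq) (sub_nonneg.mpr hs)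
    have := mul_nonneg hθ0 (by linarith : (0:ℝ) ≤ 1 - θ)
    exact mul_nonneg ‹(0:ℝ) ≤ θ * (1 - θ)› ‹_›
  nlinarith [step1]

lemma monomial_strict (a c : ℕ) (hdeg : 2 ≤ a + c) (u1 u2 θ : ℝ)
    (h1 : 0 ≤ u1) (h2 : 0 ≤ u2) (hu1 : u1 < 1) (hu2 : u2 < 1)
    (hθ0 : 0 < θ) (hθ1 : θ < 1) :
    ((1 - θ) * u1 + θ) ^ a * ((1 - θ) * u2 + θ) ^ c <
      (1 - θ) * (u1 ^ a * u2 ^ c) + θ := by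
  have hy1 : (0:ℝ) ≤ (1 - θ) * u1 + θ := by nlinarith
  have hy2 : (0:ℝ) ≤ (1 - θ) * u2 + θ := by nlinarith
  rcases Nat.eq_zero_or_pos a with ha | ha
  · subst ha
    have hc : 2 ≤ c := by omega
    have := (strictConvexOn_pow hc).2 (Set.mem_Ici.mpr h2) (Set.mem_Ici.mpr (zero_le_one))
      (by exact hu2.ne) (by linarith : (0:ℝ) < 1 - θ) hθ0 (by ring)
    simp only [smul_eq_mul, mul_one, one_pow] at this
    simpa using this
  rcases Nat.eq_zero_or_pos c with hc | hc
  · subst hc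
    have ha2 : 2 ≤ a := by omega
    have := (strictConvexOn_pow ha2).2 (Set.mem_Ici.mpr h1) (Set.mem_Ici.mpr (zero_le_one))
      (by exact hu1.ne) (by linarith : (0:ℝ) < 1 - θ) hθ0 (by ring)
    simp only [smul_eq_mul, mul_one, one_pow] at this
    simpa using this
  -- a ≥ 1 and c ≥ 1
  have hA : ((1 - θ) * u1 + θ) ^ a ≤ (1 - θ) * u1 ^ a + θ := by
    have := monomial_conv a 0 u1 1 1 1 θ h1 zero_le_one hu1.le le_rfl hθ0.le hθ1.le
    simpa using this
  have hB : ((1 - θ) * u2 + θ) ^ c ≤ (1 - θ) * u2 ^ c + θ := by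
    have := monomial_conv 0 c 1 u2 1 1 θ zero_le_one h2 le_rfl hu2.le hθ0.le hθ1.le
    simpa using this
  have hA0 : (0:ℝ) ≤ ((1 - θ) * u1 + θ) ^ a := pow_nonneg hy1 _
  have hB0 : (0:ℝ) ≤ ((1 - θ) * u2 + θ) ^ c := pow_nonneg hy2 _
  have hA'0 : (0:ℝ) ≤ (1 - θ) * u1 ^ a + θ := hA0.trans hA
  have step1 : ((1 - θ) * u1 + θ) ^ a * ((1 - θ) * u2 + θ) ^ c ≤
      ((1 - θ) * u1 ^ a + θ) * ((1 - θ) * u2 ^ c + θ) := mul_le_mul hA hB hB0 hA'0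
  have hu1a : u1 ^ a < 1 := pow_lt_one₀ h1 hu1 (by omega)
  have hu2c : u2 ^ c < 1 := pow_lt_one₀ h2 hu2 (by omega)
  have key : (0:ℝ) < θ * (1 - θ) * ((1 - u1 ^ a) * (1 - u2 ^ c)) := by
    have := mul_pos (sub_pos.mpr hu1a) (sub_pos.mpr hu2c)
    exact mul_pos (mul_pos hθ0 (by linarith)) this
  nlinarith [step1]

lemma pow_entry_zero (M : Matrix (Fin 2) (Fin 2) ℝ) (h : M 0 1 = 0) (m : ℕ) :
    (M ^ m) 0 1 = 0 := by
  induction m with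
  | zero => simp [Matrix.one_apply]
  | succ n ih =>
    rw [pow_succ, Matrix.mul_apply, Fin.sum_univ_two, ih, h]
    ring

lemma mulVec2 (N : Matrix (Fin 2) (Fin 2) ℝ) (w : Fin 2 → ℝ) (i : Fin 2) :
    (N.mulVec w) i = N i 0 * w 0 + N i 1 * w 1 := by
  simp [Matrix.mulVec, dotProduct, Fin.sum_univ_two]

lemma pow_mulVec_eigen (M : Matrix (Fin 2) (Fin 2) ℝ) (v : Fin 2 → ℝ) (lam : ℝ)
    (h : M.mulVec v = lam • v) (m : ℕ) : (M ^ m).mulVec v = (lam ^ m) • v := by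
  induction m with
  | zero => simp
  | succ n ih =>
    rw [pow_succ', ← Matrix.mulVec_mulVec, ih, Matrix.mulVec_smul, h, smul_smul, pow_succ]

lemma eigvec2 (M : Matrix (Fin 2) (Fin 2) ℝ) (v : Fin 2 → ℝ) (lam : ℝ)
    (h0 : M 0 0 * v 0 + M 0 1 * v 1 = lam * v 0)
    (h1 : M 1 0 * v 0 + M 1 1 * v 1 = lam * v 1) :
    M.mulVec v = lam • v := by
  funext i
  rw [mulVec2, Pi.smul_apply, smul_eq_mul]
  fin_cases i
  · exact h0
  · exact h1

set_option maxHeartbeats 1000000 in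
lemma noPos (M : Matrix (Fin 2) (Fin 2) ℝ) (hr : 0 < M 0 1) (hq : 0 < M 1 0)
    (h1 : M 0 0 + M 0 1 ≤ 0) (h2 : M 1 0 + M 1 1 ≤ 0) (m : ℕ)
    (hpos : ∀ i j : Fin 2, 0 < (M ^ m) i j) : False := by
  rcases Nat.eq_zero_or_pos m with hm0 | hm0
  · subst hm0
    have := hpos 0 1
    simp [Matrix.one_apply] at this
  have hmne : m ≠ 0 := hm0.ne'
  obtain ⟨a, ha⟩ : ∃ a : ℝ, M 0 0 = -a := ⟨-M 0 0, by ring⟩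
  obtain ⟨b, hb⟩ : ∃ b : ℝ, M 1 1 = -b := ⟨-M 1 1, by ring⟩
  obtain ⟨r, hrr⟩ : ∃ r : ℝ, M 0 1 = r := ⟨_, rfl⟩
  obtain ⟨q, hqq⟩ : ∃ q : ℝ, M 1 0 = q := ⟨_, rfl⟩
  rw [ha, hrr] at h1
  rw [hb, hqq] at h2
  rw [hrr] at hr
  rw [hqq] at hq
  have har : r ≤ a := by linarith
  have hbq : q ≤ b := by linarith
  have hapos : 0 < a := lt_of_lt_of_le hr har
  have hbpos : 0 < b := lt_of_lt_of_le hq hbq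
  obtain ⟨Δ, hΔ0, hΔ2⟩ : ∃ D : ℝ, 0 ≤ D ∧ D ^ 2 = (a - b) ^ 2 + 4 * r * q :=
    ⟨Real.sqrt ((a - b) ^ 2 + 4 * r * q), Real.sqrt_nonneg _,
      Real.sq_sqrt (by nlinarith)⟩
  have hgt1 : a - b < Δ := by
    by_contra hc
    push_neg at hc
    nlinarith [mul_pos hr hq]
  have hgt2 : b - a < Δ := by
    by_contra hc
    push_neg at hc
    nlinarith [mul_pos hr hq]
  have hΔpos : 0 < Δ := by nlinarith [mul_pos hr hq]
  have hΔle : Δ ≤ a + b := by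
    by_contra hc
    push_neg at hc
    nlinarith [mul_le_mul har hbq hq.le hapos.le]
  obtain ⟨lp, hlp⟩ : ∃ x : ℝ, x = (-(a + b) + Δ) / 2 := ⟨_, rfl⟩
  obtain ⟨lm, hlm⟩ : ∃ x : ℝ, x = (-(a + b) - Δ) / 2 := ⟨_, rfl⟩
  have hquadp : lp ^ 2 + (a + b) * lp + (a * b - r * q) = 0 := by
    rw [hlp]; linear_combination hΔ2 / 4
  have hquadm : lm ^ 2 + (a + b) * lm + (a * b - r * q) = 0 := by
    rw [hlm]; linear_combination hΔ2 / 4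
  have hap : 0 < a + lp := by rw [hlp]; linarith
  have ham : a + lm < 0 := by rw [hlm]; linarith
  have hMvp : M.mulVec ![r, a + lp] = lp • ![r, a + lp] := by
    have e1 : M 0 0 * r + M 0 1 * (a + lp) = lp * r := by rw [ha, hrr]; ring
    have e2 : M 1 0 * r + M 1 1 * (a + lp) = lp * (a + lp) := by
      rw [hb, hqq]; linear_combination -hquadp
    exact eigvec2 M ![r, a + lp] lp (by simpa using e1) (by simpa using e2)
  have hMvm : M.mulVec ![r, a + lm] = lm • ![r, a + lm] := by
    have e1 : M 0 0 * r + M 0 1 * (a + lm) = lm * r := by rw [ha, hrr]; ring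
    have e2 : M 1 0 * r + M 1 1 * (a + lm) = lm * (a + lm) := by
      rw [hb, hqq]; linear_combination -hquadm
    exact eigvec2 M ![r, a + lm] lm (by simpa using e1) (by simpa using e2)
  have hp := congrFun (pow_mulVec_eigen M _ lp hMvp m) 0
  have hm := congrFun (pow_mulVec_eigen M _ lm hMvm m) 0
  rw [mulVec2, Pi.smul_apply, smul_eq_mul] at hp hm
  simp only [Matrix.cons_val_zero, Matrix.cons_val_one, Matrix.head_cons] at hp hm
  have hA00 := hpos 0 0
  have hA01 := hpos 0 1
  have hlpm_pos' : 0 < lp ^ m := by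
    have h6 : 0 < lp ^ m * r := by
      rw [← hp]
      have := mul_pos hA00 hr
      have := mul_pos hA01 hap
      linarith
    by_contra hcon
    push_neg at hcon
    nlinarith
  have hgt : lm ^ m < lp ^ m := by
    have hdiff : (M ^ m) 0 1 * (a + lp - (a + lm)) = (lp ^ m - lm ^ m) * r := by
      linear_combination hp - hm
    have h5 : a + lp - (a + lm) = Δ := by rw [hlp, hlm]; ring
    rw [h5] at hdiff
    nlinarith [mul_pos hA01 hΔpos]
  have hlp_neg : lp < 0 := by
    rcases lt_or_eq_of_le (by rw [hlp]; linarith : lp ≤ 0) with h | h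
    · exact h
    · exfalso
      rw [h, zero_pow hmne] at hlpm_pos'
      exact lt_irrefl 0 hlpm_pos'
  have hlm_lt : lm < lp := by rw [hlp, hlm]; linarith
  have heven : Even m := by
    by_contra hodd
    have hoddm : Odd m := Nat.not_even_iff_odd.mp hodd
    have := Odd.pow_neg hoddm hlp_neg
    linarith
  have hfin : lp ^ m < lm ^ m := by
    have habs : |lp| < |lm| := by
      rw [abs_of_neg hlp_neg, abs_of_neg (hlm_lt.trans hlp_neg)]
      linarith
    calc lp ^ m = |lp| ^ m := (Even.pow_abs heven lp).symm
      _ < |lm| ^ m := pow_lt_pow_left₀ habs (abs_nonneg _) hmne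
      _ = lm ^ m := Even.pow_abs heven lm
  linarith
lemma term_conv (b : ℕ × ℕ → ℝ) (e : ℕ × ℕ) (hdeg : e.1 + e.2 = 1)
    (hb : ∀ j : ℕ × ℕ, j ≠ e → 0 ≤ b j)
    (x z y : ℝ × ℝ) (hx1 : 0 ≤ x.1) (hx2 : 0 ≤ x.2)
    (hxz1 : x.1 ≤ z.1) (hxz2 : x.2 ≤ z.2) (θ : ℝ) (hθ0 : 0 ≤ θ) (hθ1 : θ ≤ 1)
    (hy1 : y.1 = (1 - θ) * x.1 + θ * z.1) (hy2 : y.2 = (1 - θ) * x.2 + θ * z.2) :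
    ∀ j : ℕ × ℕ, b j * y.1 ^ j.1 * y.2 ^ j.2 ≤
      (1 - θ) * (b j * x.1 ^ j.1 * x.2 ^ j.2) + θ * (b j * z.1 ^ j.1 * z.2 ^ j.2) := by
  intro j
  by_cases hje : j = e
  · subst hje
    rcases j with ⟨j1, j2⟩
    simp only at hdeg
    rcases (by omega : j1 = 1 ∧ j2 = 0 ∨ j1 = 0 ∧ j2 = 1) with ⟨rfl, rfl⟩ | ⟨rfl, rfl⟩
    · simp only [pow_one, pow_zero, mul_one]
      rw [hy1]; ring_nf; exact le_refl _
    · simp only [pow_one, pow_zero, mul_one]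
      rw [hy2]; ring_nf; exact le_refl _
  · have hbj := hb j hje
    have hmon := monomial_conv j.1 j.2 x.1 x.2 z.1 z.2 θ hx1 hx2 hxz1 hxz2 hθ0 hθ1
    rw [← hy1, ← hy2] at hmon
    calc b j * y.1 ^ j.1 * y.2 ^ j.2 = b j * (y.1 ^ j.1 * y.2 ^ j.2) := by ring
      _ ≤ b j * ((1 - θ) * (x.1 ^ j.1 * x.2 ^ j.2) + θ * (z.1 ^ j.1 * z.2 ^ j.2)) :=
        mul_le_mul_of_nonneg_left hmon hbj
      _ = (1 - θ) * (b j * x.1 ^ j.1 * x.2 ^ j.2) + θ * (b j * z.1 ^ j.1 * z.2 ^ j.2) := by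
        ring

lemma genFun_conv (b : ℕ × ℕ → ℝ) (e : ℕ × ℕ) (hdeg : e.1 + e.2 = 1)
    (hb : ∀ j : ℕ × ℕ, j ≠ e → 0 ≤ b j) (habs : Summable fun j : ℕ × ℕ => |b j|)
    (x z y : ℝ × ℝ) (hx1 : 0 ≤ x.1) (hx2 : 0 ≤ x.2)
    (hxz1 : x.1 ≤ z.1) (hxz2 : x.2 ≤ z.2) (hz1 : z.1 ≤ 1) (hz2 : z.2 ≤ 1)
    (θ : ℝ) (hθ0 : 0 ≤ θ) (hθ1 : θ ≤ 1)
    (hy1 : y.1 = (1 - θ) * x.1 + θ * z.1) (hy2 : y.2 = (1 - θ) * x.2 + θ * z.2) :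
    genFun b y ≤ (1 - θ) * genFun b x + θ * genFun b z := by
  have hzv1 : (0:ℝ) ≤ z.1 := hx1.trans hxz1
  have hzv2 : (0:ℝ) ≤ z.2 := hx2.trans hxz2
  have hx11 : x.1 ≤ 1 := hxz1.trans hz1
  have hx21 : x.2 ≤ 1 := hxz2.trans hz2
  have hyv1 : 0 ≤ y.1 := by rw [hy1]; nlinarith
  have hyv2 : 0 ≤ y.2 := by rw [hy2]; nlinarith
  have hyv1' : y.1 ≤ 1 := by rw [hy1]; nlinarith
  have hyv2' : y.2 ≤ 1 := by rw [hy2]; nlinarith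
  have hsx := summable_term b habs x hx1 hx2 hx11 hx21
  have hsz := summable_term b habs z hzv1 hzv2 hz1 hz2
  have hsy := summable_term b habs y hyv1 hyv2 hyv1' hyv2'
  have hcomb : Summable fun j : ℕ × ℕ =>
      (1 - θ) * (b j * x.1 ^ j.1 * x.2 ^ j.2) + θ * (b j * z.1 ^ j.1 * z.2 ^ j.2) :=
    (hsx.mul_left _).add (hsz.mul_left _)
  have h := Summable.tsum_le_tsum (term_conv b e hdeg hb x z y hx1 hx2 hxz1 hxz2 θ hθ0 hθ1 hy1 hy2)
    hsy hcomb
  rw [Summable.tsum_add (hsx.mul_left _) (hsz.mul_left _), tsum_mul_left, tsum_mul_left] at h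
  exact h

lemma genFun_conv_eq (b : ℕ × ℕ → ℝ) (e : ℕ × ℕ) (hdeg : e.1 + e.2 = 1)
    (hb : ∀ j : ℕ × ℕ, j ≠ e → 0 ≤ b j) (habs : Summable fun j : ℕ × ℕ => |b j|)
    (x z y : ℝ × ℝ) (hx1 : 0 ≤ x.1) (hx2 : 0 ≤ x.2)
    (hxz1 : x.1 ≤ z.1) (hxz2 : x.2 ≤ z.2) (hz1 : z.1 ≤ 1) (hz2 : z.2 ≤ 1)
    (θ : ℝ) (hθ0 : 0 ≤ θ) (hθ1 : θ ≤ 1)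
    (hy1 : y.1 = (1 - θ) * x.1 + θ * z.1) (hy2 : y.2 = (1 - θ) * x.2 + θ * z.2)
    (heq : genFun b y = (1 - θ) * genFun b x + θ * genFun b z) :
    ∀ j : ℕ × ℕ, b j * y.1 ^ j.1 * y.2 ^ j.2 =
      (1 - θ) * (b j * x.1 ^ j.1 * x.2 ^ j.2) + θ * (b j * z.1 ^ j.1 * z.2 ^ j.2) := by
  have hzv1 : (0:ℝ) ≤ z.1 := hx1.trans hxz1
  have hzv2 : (0:ℝ) ≤ z.2 := hx2.trans hxz2
  have hx11 : x.1 ≤ 1 := hxz1.trans hz1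
  have hx21 : x.2 ≤ 1 := hxz2.trans hz2
  have hyv1 : 0 ≤ y.1 := by rw [hy1]; nlinarith
  have hyv2 : 0 ≤ y.2 := by rw [hy2]; nlinarith
  have hyv1' : y.1 ≤ 1 := by rw [hy1]; nlinarith
  have hyv2' : y.2 ≤ 1 := by rw [hy2]; nlinarith
  have hsx := summable_term b habs x hx1 hx2 hx11 hx21
  have hsz := summable_term b habs z hzv1 hzv2 hz1 hz2
  have hsy := summable_term b habs y hyv1 hyv2 hyv1' hyv2'
  have hcomb : Summable fun j : ℕ × ℕ =>
      (1 - θ) * (b j * x.1 ^ j.1 * x.2 ^ j.2) + θ * (b j * z.1 ^ j.1 * z.2 ^ j.2) :=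
    (hsx.mul_left _).add (hsz.mul_left _)
  have hterm := term_conv b e hdeg hb x z y hx1 hx2 hxz1 hxz2 θ hθ0 hθ1 hy1 hy2
  set f : ℕ × ℕ → ℝ := fun j => b j * y.1 ^ j.1 * y.2 ^ j.2 with hf
  set g : ℕ × ℕ → ℝ := fun j => (1 - θ) * (b j * x.1 ^ j.1 * x.2 ^ j.2)
      + θ * (b j * z.1 ^ j.1 * z.2 ^ j.2) with hg
  have hsum_eq : ∑' j, (g j - f j) = 0 := by
    rw [Summable.tsum_sub hcomb hsy]
    have hgval : ∑' j, g j = (1 - θ) * genFun b x + θ * genFun b z := by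
      rw [hg]
      rw [Summable.tsum_add (hsx.mul_left _) (hsz.mul_left _), tsum_mul_left, tsum_mul_left]
      rfl
    have hfval : ∑' j, f j = genFun b y := rfl
    rw [hgval, hfval, heq]
    ring
  intro j
  have hle := Summable.le_tsum (hcomb.sub hsy) j (fun k _ => sub_nonneg.mpr (hterm k))
  rw [hsum_eq] at hle
  have := hterm j
  have : g j - f j = 0 := le_antisymm hle (sub_nonneg.mpr (hterm j))
  have heqj : f j = g j := by linarith [this]
  exact heqj

lemma genFun_mono_snd (b : ℕ × ℕ → ℝ) (hb : ∀ j : ℕ × ℕ, j ≠ (1, 0) → 0 ≤ b j)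
    (habs : Summable fun j : ℕ × ℕ => |b j|) (x1 w s2 : ℝ)
    (hx0 : 0 ≤ x1) (hx1 : x1 ≤ 1) (hw0 : 0 ≤ w) (hws : w ≤ s2) (hs1 : s2 ≤ 1) :
    genFun b (x1, w) ≤ genFun b (x1, s2) := by
  refine Summable.tsum_le_tsum ?_ (summable_term b habs (x1, w) hx0 hw0 hx1 (hws.trans hs1))
    (summable_term b habs (x1, s2) hx0 (hw0.trans hws) hx1 hs1)
  intro j
  by_cases hj : j = (1, 0)
  · subst hj; simp
  · have hbj := hb j hj
    have : w ^ j.2 ≤ s2 ^ j.2 := pow_le_pow_left₀ hw0 hws _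
    have hx1n : (0:ℝ) ≤ x1 ^ j.1 := pow_nonneg hx0 _
    calc b j * (x1, w).1 ^ j.1 * (x1, w).2 ^ j.2 = b j * x1 ^ j.1 * w ^ j.2 := rfl
      _ ≤ b j * x1 ^ j.1 * s2 ^ j.2 :=
        mul_le_mul_of_nonneg_left this (mul_nonneg hbj hx1n)
      _ = b j * (x1, s2).1 ^ j.1 * (x1, s2).2 ^ j.2 := rfl

lemma genFun_mono_fst (b : ℕ × ℕ → ℝ) (hb : ∀ j : ℕ × ℕ, j ≠ (0, 1) → 0 ≤ b j)
    (habs : Summable fun j : ℕ × ℕ => |b j|) (w x1 y2 : ℝ)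
    (hw0 : 0 ≤ w) (hws : w ≤ x1) (hx1 : x1 ≤ 1) (hy0 : 0 ≤ y2) (hy1 : y2 ≤ 1) :
    genFun b (w, y2) ≤ genFun b (x1, y2) := by
  refine Summable.tsum_le_tsum ?_ (summable_term b habs (w, y2) hw0 hy0 (hws.trans hx1) hy1)
    (summable_term b habs (x1, y2) (hw0.trans hws) hy0 hx1 hy1)
  intro j
  by_cases hj : j = (0, 1)
  · subst hj; simp
  · have hbj := hb j hj
    have h5 : w ^ j.1 ≤ x1 ^ j.1 := pow_le_pow_left₀ hw0 hws _
    have hyn : (0:ℝ) ≤ y2 ^ j.2 := pow_nonneg hy0 _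
    calc b j * (w, y2).1 ^ j.1 * (w, y2).2 ^ j.2 = b j * (w ^ j.1 * y2 ^ j.2) := by
          show b j * w ^ j.1 * y2 ^ j.2 = _; ring
      _ ≤ b j * (x1 ^ j.1 * y2 ^ j.2) := by
          refine mul_le_mul_of_nonneg_left ?_ hbj
          exact mul_le_mul_of_nonneg_right h5 hyn
      _ = b j * (x1, y2).1 ^ j.1 * (x1, y2).2 ^ j.2 := by
          show _ = b j * x1 ^ j.1 * y2 ^ j.2; ring

lemma genFun_edge_fst (b : ℕ × ℕ → ℝ) (hb : ∀ j : ℕ × ℕ, j ≠ (1, 0) → 0 ≤ b j)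
    (habs : Summable fun j : ℕ × ℕ => |b j|) (hzero : genFun b (1, 1) = 0)
    (j0 : ℕ × ℕ) (hj02 : j0.2 ≠ 0) (hbj0 : b j0 ≠ 0)
    (y : ℝ) (hy0 : 0 ≤ y) (hy1 : y < 1) : genFun b (1, y) < 0 := by
  have hj0ne : j0 ≠ (1, 0) := by
    intro h; rw [h] at hj02; exact hj02 rfl
  have hbj0pos : 0 < b j0 := lt_of_le_of_ne (hb j0 hj0ne) (Ne.symm hbj0)
  have hsf := summable_term b habs (1, y) zero_le_one hy0 le_rfl hy1.le
  have hsg := summable_term b habs (1, 1) zero_le_one zero_le_one le_rfl le_rfl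
  have hlt : genFun b (1, y) < genFun b (1, 1) := by
    refine Summable.tsum_lt_tsum (i := j0) ?_ ?_ hsf hsg
    · intro j
      by_cases hj : j = (1, 0)
      · subst hj; simp
      · have hbj := hb j hj
        simp only
        have h5 : y ^ j.2 ≤ 1 ^ j.2 := pow_le_pow_left₀ hy0 hy1.le _
        calc b j * (1:ℝ) ^ j.1 * y ^ j.2 ≤ b j * (1:ℝ) ^ j.1 * 1 ^ j.2 :=
            mul_le_mul_of_nonneg_left h5 (mul_nonneg hbj (pow_nonneg zero_le_one _))
          _ = b j * (1:ℝ) ^ j.1 * (1:ℝ) ^ j.2 := rfl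
    · simp only
      have h5 : y ^ j0.2 < 1 := pow_lt_one₀ hy0 hy1 hj02
      have : b j0 * y ^ j0.2 < b j0 * 1 := by
        exact mul_lt_mul_of_pos_left h5 hbj0pos
      simpa using this
  rwa [hzero] at hlt

lemma genFun_edge_snd (b : ℕ × ℕ → ℝ) (hb : ∀ j : ℕ × ℕ, j ≠ (0, 1) → 0 ≤ b j)
    (habs : Summable fun j : ℕ × ℕ => |b j|) (hzero : genFun b (1, 1) = 0)
    (j0 : ℕ × ℕ) (hj01 : j0.1 ≠ 0) (hbj0 : b j0 ≠ 0)
    (y : ℝ) (hy0 : 0 ≤ y) (hy1 : y < 1) : genFun b (y, 1) < 0 := by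
  have hj0ne : j0 ≠ (0, 1) := by
    intro h; rw [h] at hj01; exact hj01 rfl
  have hbj0pos : 0 < b j0 := lt_of_le_of_ne (hb j0 hj0ne) (Ne.symm hbj0)
  have hsf := summable_term b habs (y, 1) hy0 zero_le_one hy1.le le_rfl
  have hsg := summable_term b habs (1, 1) zero_le_one zero_le_one le_rfl le_rfl
  have hlt : genFun b (y, 1) < genFun b (1, 1) := by
    refine Summable.tsum_lt_tsum (i := j0) ?_ ?_ hsf hsg
    · intro j
      by_cases hj : j = (0, 1)
      · subst hj; simp
      · have hbj := hb j hj
        simp only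
        have h5 : y ^ j.1 ≤ 1 ^ j.1 := pow_le_pow_left₀ hy0 hy1.le _
        calc b j * y ^ j.1 * (1:ℝ) ^ j.2 = (b j * (1:ℝ) ^ j.2) * y ^ j.1 := by ring
          _ ≤ (b j * (1:ℝ) ^ j.2) * 1 ^ j.1 :=
            mul_le_mul_of_nonneg_left h5 (mul_nonneg hbj (pow_nonneg zero_le_one _))
          _ = b j * (1:ℝ) ^ j.1 * (1:ℝ) ^ j.2 := by ring
    · simp only
      have h5 : y ^ j0.1 < 1 := pow_lt_one₀ hy0 hy1 hj01
      have : b j0 * y ^ j0.1 < b j0 * 1 := mul_lt_mul_of_pos_left h5 hbj0pos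
      have hgoal : b j0 * y ^ j0.1 * (1:ℝ) ^ j0.2 < b j0 * (1:ℝ) ^ j0.1 * (1:ℝ) ^ j0.2 := by
        simpa using this
      exact hgoal
  rwa [hzero] at hlt
set_option maxHeartbeats 1000000 in
lemma key_lemma (b₁ b₂ : ℕ × ℕ → ℝ)
    (hb₁ : ∀ j : ℕ × ℕ, j ≠ (1, 0) → 0 ≤ b₁ j)
    (hb₂ : ∀ j : ℕ × ℕ, j ≠ (0, 1) → 0 ≤ b₂ j)
    (habs₁ : Summable fun j : ℕ × ℕ => |b₁ j|)
    (habs₂ : Summable fun j : ℕ × ℕ => |b₂ j|)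
    (h11₁ : genFun b₁ (1, 1) = 0) (h11₂ : genFun b₂ (1, 1) = 0)
    (hedge1 : ∀ y : ℝ, 0 ≤ y → y < 1 → genFun b₁ (1, y) < 0)
    (hedge2 : ∀ y : ℝ, 0 ≤ y → y < 1 → genFun b₂ (y, 1) < 0)
    (haff : (∀ j : ℕ × ℕ, 2 ≤ j.1 + j.2 → b₁ j = 0) →
      (∀ j : ℕ × ℕ, 2 ≤ j.1 + j.2 → b₂ j = 0) → False)
    (u s : ℝ × ℝ) (hu1 : 0 ≤ u.1) (hu2 : 0 ≤ u.2)
    (hus1 : u.1 ≤ s.1) (hus2 : u.2 ≤ s.2) (hne : u ≠ s) (hs1 : s.1 < 1) (hs2 : s.2 < 1)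
    (hFu1 : genFun b₁ u ≤ 0) (hFu2 : genFun b₂ u ≤ 0)
    (hFs1 : genFun b₁ s = 0) (hFs2 : genFun b₂ s = 0) : False := by
  have hu1' : u.1 < 1 := lt_of_le_of_lt hus1 hs1
  have hu2' : u.2 < 1 := lt_of_le_of_lt hus2 hs2
  have hd1 : 0 ≤ s.1 - u.1 := by linarith
  have hd2 : 0 ≤ s.2 - u.2 := by linarith
  have hdne : s.1 - u.1 ≠ 0 ∨ s.2 - u.2 ≠ 0 := by
    by_contra hcon
    push_neg at hcon
    exact hne (Prod.ext (by linarith [hcon.1]) (by linarith [hcon.2]))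
  rcases lt_trichotomy ((s.2 - u.2) * (1 - u.1)) ((s.1 - u.1) * (1 - u.2)) with hlt | heqq | hgt
  · -- ray exits through the edge x₁ = 1
    have hd1pos : 0 < s.1 - u.1 := by nlinarith
    obtain ⟨θ, hθdef⟩ : ∃ t : ℝ, t = (s.1 - u.1) / (1 - u.1) := ⟨_, rfl⟩
    have hθpos : 0 < θ := by rw [hθdef]; exact div_pos hd1pos (by linarith)
    have hθlt : θ < 1 := by rw [hθdef]; rw [div_lt_one (by linarith)]; linarith
    obtain ⟨z2, hz2def⟩ : ∃ t : ℝ, t = u.2 + (1 - u.1) / (s.1 - u.1) * (s.2 - u.2) :=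
      ⟨_, rfl⟩
    have hz2ge : u.2 ≤ z2 := by
      rw [hz2def]
      have : 0 ≤ (1 - u.1) / (s.1 - u.1) * (s.2 - u.2) :=
        mul_nonneg (div_nonneg (by linarith) hd1pos.le) hd2
      linarith
    have hz2lt : z2 < 1 := by
      rw [hz2def]
      have h8 : (1 - u.1) / (s.1 - u.1) * (s.2 - u.2) < 1 - u.2 := by
        rw [div_mul_eq_mul_div, div_lt_iff₀ hd1pos]
        nlinarith
      linarith
    have h10 : (1 : ℝ) - u.1 ≠ 0 := by linarith
    have hmul : θ * (1 - u.1) = s.1 - u.1 := by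
      rw [hθdef, div_mul_cancel₀ _ h10]
    have hy1 : s.1 = (1 - θ) * u.1 + θ * (1 : ℝ) := by linear_combination -hmul
    have hmul2 : θ * (z2 - u.2) = s.2 - u.2 := by
      rw [hθdef, hz2def]
      field_simp
      ring
    have hy2 : s.2 = (1 - θ) * u.2 + θ * z2 := by linear_combination -hmul2
    have hconv := genFun_conv b₁ (1, 0) rfl hb₁ habs₁ u (1, z2) s hu1 hu2
      (by exact hu1'.le) hz2ge le_rfl hz2lt.le θ hθpos.le hθlt.le hy1 hy2
    have hzneg : genFun b₁ (1, z2) < 0 := hedge1 z2 (hu2.trans hz2ge) hz2lt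
    have c1 : (1 - θ) * genFun b₁ u ≤ 0 := by nlinarith
    have c2 : θ * genFun b₁ (1, z2) < 0 := mul_neg_of_pos_of_neg hθpos hzneg
    rw [hFs1] at hconv
    linarith
  · -- ray exits exactly at the corner (1,1): degenerate affine case
    have hd1pos : 0 < s.1 - u.1 := by
      rcases hdne with h | h
      · exact lt_of_le_of_ne hd1 (Ne.symm h)
      · by_contra hc
        push_neg at hc
        have h9 : s.1 - u.1 = 0 := le_antisymm hc hd1
        rw [h9] at heqq
        have : s.2 - u.2 = 0 := by nlinarith
        exact h this
    have hd2pos : 0 < s.2 - u.2 := by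
      by_contra hc
      push_neg at hc
      have h9 : s.2 - u.2 = 0 := le_antisymm hc hd2
      rw [h9] at heqq
      have : s.1 - u.1 = 0 := by nlinarith
      exact absurd this hd1pos.ne'
    obtain ⟨θ, hθdef⟩ : ∃ t : ℝ, t = (s.1 - u.1) / (1 - u.1) := ⟨_, rfl⟩
    have hθpos : 0 < θ := by rw [hθdef]; exact div_pos hd1pos (by linarith)
    have hθlt : θ < 1 := by rw [hθdef]; rw [div_lt_one (by linarith)]; linarith
    have h10 : (1 : ℝ) - u.1 ≠ 0 := by linarith
    have hmul : θ * (1 - u.1) = s.1 - u.1 := by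
      rw [hθdef, div_mul_cancel₀ _ h10]
    have hy1 : s.1 = (1 - θ) * u.1 + θ * (1 : ℝ) := by linear_combination -hmul
    have hmul2 : θ * (1 - u.2) = s.2 - u.2 := by
      rw [hθdef, div_mul_eq_mul_div, div_eq_iff h10]
      linear_combination -heqq
    have hy2 : s.2 = (1 - θ) * u.2 + θ * (1 : ℝ) := by linear_combination -hmul2
    have honele : ((1:ℝ), (1:ℝ)).1 ≤ 1 := le_rfl
    have hconv₁ := genFun_conv b₁ (1, 0) rfl hb₁ habs₁ u (1, 1) s hu1 hu2
      hu1'.le hu2'.le le_rfl le_rfl θ hθpos.le hθlt.le hy1 hy2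
    have hconv₂ := genFun_conv b₂ (0, 1) rfl hb₂ habs₂ u (1, 1) s hu1 hu2
      hu1'.le hu2'.le le_rfl le_rfl θ hθpos.le hθlt.le hy1 hy2
    rw [hFs1, h11₁, mul_zero, add_zero] at hconv₁
    rw [hFs2, h11₂, mul_zero, add_zero] at hconv₂
    have hFu1z : genFun b₁ u = 0 := by
      refine le_antisymm hFu1 ?_
      by_contra hc
      push_neg at hc
      have h12 := mul_neg_of_pos_of_neg (by linarith : (0:ℝ) < 1 - θ) hc
      linarith
    have hFu2z : genFun b₂ u = 0 := by
      refine le_antisymm hFu2 ?_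
      by_contra hc
      push_neg at hc
      have h12 := mul_neg_of_pos_of_neg (by linarith : (0:ℝ) < 1 - θ) hc
      linarith
    have heq₁ : genFun b₁ s = (1 - θ) * genFun b₁ u + θ * genFun b₁ (1, 1) := by
      rw [hFs1, hFu1z, h11₁]; ring
    have heq₂ : genFun b₂ s = (1 - θ) * genFun b₂ u + θ * genFun b₂ (1, 1) := by
      rw [hFs2, hFu2z, h11₂]; ring
    have hterm₁ := genFun_conv_eq b₁ (1, 0) rfl hb₁ habs₁ u (1, 1) s hu1 hu2
      hu1'.le hu2'.le le_rfl le_rfl θ hθpos.le hθlt.le hy1 hy2 heq₁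
    have hterm₂ := genFun_conv_eq b₂ (0, 1) rfl hb₂ habs₂ u (1, 1) s hu1 hu2
      hu1'.le hu2'.le le_rfl le_rfl θ hθpos.le hθlt.le hy1 hy2 heq₂
    have hsupp₁ : ∀ j : ℕ × ℕ, 2 ≤ j.1 + j.2 → b₁ j = 0 := by
      intro j hdeg2
      by_contra hne0
      have hjne : j ≠ (1, 0) := by
        intro h; rw [h] at hdeg2; simp at hdeg2
      have hbpos : 0 < b₁ j := lt_of_le_of_ne (hb₁ j hjne) (Ne.symm hne0)
      have hstrict := monomial_strict j.1 j.2 hdeg2 u.1 u.2 θ hu1 hu2 hu1' hu2'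
        hθpos hθlt
      have hstrict2 : s.1 ^ j.1 * s.2 ^ j.2 < (1 - θ) * (u.1 ^ j.1 * u.2 ^ j.2) + θ := by
        rw [hy1, hy2]; simpa using hstrict
      have e := hterm₁ j
      simp only [one_pow, mul_one] at e
      nlinarith [mul_pos hbpos (sub_pos.mpr hstrict2)]
    have hsupp₂ : ∀ j : ℕ × ℕ, 2 ≤ j.1 + j.2 → b₂ j = 0 := by
      intro j hdeg2
      by_contra hne0
      have hjne : j ≠ (0, 1) := by
        intro h; rw [h] at hdeg2; simp at hdeg2
      have hbpos : 0 < b₂ j := lt_of_le_of_ne (hb₂ j hjne) (Ne.symm hne0)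
      have hstrict := monomial_strict j.1 j.2 hdeg2 u.1 u.2 θ hu1 hu2 hu1' hu2'
        hθpos hθlt
      have hstrict2 : s.1 ^ j.1 * s.2 ^ j.2 < (1 - θ) * (u.1 ^ j.1 * u.2 ^ j.2) + θ := by
        rw [hy1, hy2]; simpa using hstrict
      have e := hterm₂ j
      simp only [one_pow, mul_one] at e
      nlinarith [mul_pos hbpos (sub_pos.mpr hstrict2)]
    exact haff hsupp₁ hsupp₂
  · -- ray exits through the edge x₂ = 1
    have hd2pos : 0 < s.2 - u.2 := by nlinarith
    obtain ⟨θ, hθdef⟩ : ∃ t : ℝ, t = (s.2 - u.2) / (1 - u.2) := ⟨_, rfl⟩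
    have hθpos : 0 < θ := by rw [hθdef]; exact div_pos hd2pos (by linarith)
    have hθlt : θ < 1 := by rw [hθdef]; rw [div_lt_one (by linarith)]; linarith
    obtain ⟨z1, hz1def⟩ : ∃ t : ℝ, t = u.1 + (1 - u.2) / (s.2 - u.2) * (s.1 - u.1) :=
      ⟨_, rfl⟩
    have hz1ge : u.1 ≤ z1 := by
      rw [hz1def]
      have : 0 ≤ (1 - u.2) / (s.2 - u.2) * (s.1 - u.1) :=
        mul_nonneg (div_nonneg (by linarith) hd2pos.le) hd1
      linarith
    have hz1lt : z1 < 1 := by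
      rw [hz1def]
      have h8 : (1 - u.2) / (s.2 - u.2) * (s.1 - u.1) < 1 - u.1 := by
        rw [div_mul_eq_mul_div, div_lt_iff₀ hd2pos]
        nlinarith
      linarith
    have h10 : (1 : ℝ) - u.2 ≠ 0 := by linarith
    have hmul : θ * (1 - u.2) = s.2 - u.2 := by
      rw [hθdef, div_mul_cancel₀ _ h10]
    have hy2 : s.2 = (1 - θ) * u.2 + θ * (1 : ℝ) := by linear_combination -hmul
    have hmul2 : θ * (z1 - u.1) = s.1 - u.1 := by
      rw [hθdef, hz1def]
      field_simp
      ring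
    have hy1 : s.1 = (1 - θ) * u.1 + θ * z1 := by linear_combination -hmul2
    have hconv := genFun_conv b₂ (0, 1) rfl hb₂ habs₂ u (z1, 1) s hu1 hu2
      hz1ge hu2'.le hz1lt.le le_rfl θ hθpos.le hθlt.le hy1 hy2
    have hzneg : genFun b₂ (z1, 1) < 0 := hedge2 z1 (hu1.trans hz1ge) hz1lt
    have c1 : (1 - θ) * genFun b₂ u ≤ 0 := by nlinarith
    have c2 : θ * genFun b₂ (z1, 1) < 0 := mul_neg_of_pos_of_neg hθpos hzneg
    rw [hFs2] at hconv
    linarith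
lemma pow_entry_zero' (M : Matrix (Fin 2) (Fin 2) ℝ) (h : M 1 0 = 0) (m : ℕ) :
    (M ^ m) 1 0 = 0 := by
  induction m with
  | zero => simp [Matrix.one_apply]
  | succ n ih =>
    rw [pow_succ, Matrix.mul_apply, Fin.sum_univ_two, ih, h]
    ring

lemma deg_classify (a c : ℕ) (h00 : ¬(a = 0 ∧ c = 0)) (h10 : ¬(a = 1 ∧ c = 0))
    (h01 : ¬(a = 0 ∧ c = 1)) : 2 ≤ a + c := by omega

set_option maxHeartbeats 1000000 in
theorem at_most_two_roots (b₁ b₂ : ℕ × ℕ → ℝ)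
    (hb₁ : ∀ j : ℕ × ℕ, j ≠ (1, 0) → 0 ≤ b₁ j)
    (hb₂ : ∀ j : ℕ × ℕ, j ≠ (0, 1) → 0 ≤ b₂ j)
    (hs₁ : Summable fun j : ℕ × ℕ => if j = (1, 0) then 0 else b₁ j)
    (hs₂ : Summable fun j : ℕ × ℕ => if j = (0, 1) then 0 else b₂ j)
    (he₁ : b₁ (1, 0) = -∑' j : ℕ × ℕ, if j = (1, 0) then 0 else b₁ j)
    (he₂ : b₂ (0, 1) = -∑' j : ℕ × ℕ, if j = (0, 1) then 0 else b₂ j)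
    (hA2 : (Summable fun j : ℕ × ℕ => b₁ j * (j.1 : ℝ)) ∧
      (Summable fun j : ℕ × ℕ => b₁ j * (j.2 : ℝ)) ∧
      (Summable fun j : ℕ × ℕ => b₂ j * (j.1 : ℝ)) ∧
      (Summable fun j : ℕ × ℕ => b₂ j * (j.2 : ℝ)))
    (hA1 : ¬ ∃ M : Matrix (Fin 2) (Fin 2) ℝ, ∀ x ∈ Set.Icc ((0 : ℝ), (0 : ℝ)) (1, 1),
      genFun b₁ x = x.1 * M 0 0 + x.2 * M 1 0 ∧ genFun b₂ x = x.1 * M 0 1 + x.2 * M 1 1)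
    (hA3 : ∃ m : ℕ, ∀ i j : Fin 2, 0 < ((jacMat b₁ b₂ (1, 1)) ^ m) i j)
    :
    {x : ℝ × ℝ | x ∈ Set.Icc ((0 : ℝ), (0 : ℝ)) (1, 1) ∧ genFun b₁ x = 0 ∧ genFun b₂ x = 0}.encard ≤ 2 := by
  classical
  obtain ⟨m, hm⟩ := hA3
  have habs₁ : Summable fun j : ℕ × ℕ => |b₁ j| := abs_summable_of_ite b₁ (1, 0) hs₁
  have habs₂ : Summable fun j : ℕ × ℕ => |b₂ j| := abs_summable_of_ite b₂ (0, 1) hs₂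
  have h11₁ : genFun b₁ (1, 1) = 0 := genFun_one_one b₁ (1, 0) habs₁ he₁
  have h11₂ : genFun b₂ (1, 1) = 0 := genFun_one_one b₂ (0, 1) habs₂ he₂
  have hM01 : jacMat b₁ b₂ (1, 1) 0 1 =
      ∑' j : ℕ × ℕ, b₁ j * (j.2 : ℝ) * (1:ℝ) ^ j.1 * (1:ℝ) ^ (j.2 - 1) := by
    simp [jacMat]
  have hM10 : jacMat b₁ b₂ (1, 1) 1 0 =
      ∑' j : ℕ × ℕ, b₂ j * (j.1 : ℝ) * (1:ℝ) ^ (j.1 - 1) * (1:ℝ) ^ j.2 := by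
    simp [jacMat]
  have hM00 : jacMat b₁ b₂ (1, 1) 0 0 =
      ∑' j : ℕ × ℕ, b₁ j * (j.1 : ℝ) * (1:ℝ) ^ (j.1 - 1) * (1:ℝ) ^ j.2 := by
    simp [jacMat]
  have hM11 : jacMat b₁ b₂ (1, 1) 1 1 =
      ∑' j : ℕ × ℕ, b₂ j * (j.2 : ℝ) * (1:ℝ) ^ j.1 * (1:ℝ) ^ (j.2 - 1) := by
    simp [jacMat]
  have h01nn : 0 ≤ jacMat b₁ b₂ (1, 1) 0 1 := by
    rw [hM01]
    apply tsum_nonneg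
    intro j
    by_cases hj : j = (1, 0)
    · subst hj; norm_num
    · exact mul_nonneg (mul_nonneg (mul_nonneg (hb₁ j hj) (Nat.cast_nonneg _))
        (pow_nonneg zero_le_one _)) (pow_nonneg zero_le_one _)
  have h10nn : 0 ≤ jacMat b₁ b₂ (1, 1) 1 0 := by
    rw [hM10]
    apply tsum_nonneg
    intro j
    by_cases hj : j = (0, 1)
    · subst hj; norm_num
    · exact mul_nonneg (mul_nonneg (mul_nonneg (hb₂ j hj) (Nat.cast_nonneg _))
        (pow_nonneg zero_le_one _)) (pow_nonneg zero_le_one _)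
  have hM01pos : 0 < jacMat b₁ b₂ (1, 1) 0 1 := by
    rcases h01nn.lt_or_eq with h | h
    · exact h
    · exact absurd (pow_entry_zero _ h.symm m) (hm 0 1).ne'
  have hM10pos : 0 < jacMat b₁ b₂ (1, 1) 1 0 := by
    rcases h10nn.lt_or_eq with h | h
    · exact h
    · exact absurd (pow_entry_zero' _ h.symm m) (hm 1 0).ne'
  have hex1 : ∃ j : ℕ × ℕ, j.2 ≠ 0 ∧ b₁ j ≠ 0 := by
    by_contra hc
    push_neg at hc
    have hz : jacMat b₁ b₂ (1, 1) 0 1 = 0 := by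
      rw [hM01]
      have : ∀ j : ℕ × ℕ, b₁ j * (j.2 : ℝ) * (1:ℝ) ^ j.1 * (1:ℝ) ^ (j.2 - 1) = 0 := by
        intro j
        by_cases h2 : j.2 = 0
        · simp [h2]
        · simp [hc j h2]
      rw [tsum_congr this, tsum_zero]
    exact absurd hz hM01pos.ne'
  have hex2 : ∃ j : ℕ × ℕ, j.1 ≠ 0 ∧ b₂ j ≠ 0 := by
    by_contra hc
    push_neg at hc
    have hz : jacMat b₁ b₂ (1, 1) 1 0 = 0 := by
      rw [hM10]
      have : ∀ j : ℕ × ℕ, b₂ j * (j.1 : ℝ) * (1:ℝ) ^ (j.1 - 1) * (1:ℝ) ^ j.2 = 0 := by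
        intro j
        by_cases h2 : j.1 = 0
        · simp [h2]
        · simp [hc j h2]
      rw [tsum_congr this, tsum_zero]
    exact absurd hz hM10pos.ne'
  obtain ⟨jx, hjx2, hjxb⟩ := hex1
  obtain ⟨jy, hjy1, hjyb⟩ := hex2
  have hedge1 : ∀ y : ℝ, 0 ≤ y → y < 1 → genFun b₁ (1, y) < 0 := fun y hy0 hy1 =>
    genFun_edge_fst b₁ hb₁ habs₁ h11₁ jx hjx2 hjxb y hy0 hy1
  have hedge2 : ∀ y : ℝ, 0 ≤ y → y < 1 → genFun b₂ (y, 1) < 0 := fun y hy0 hy1 =>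
    genFun_edge_snd b₂ hb₂ habs₂ h11₂ jy hjy1 hjyb y hy0 hy1
  have haff : (∀ j : ℕ × ℕ, 2 ≤ j.1 + j.2 → b₁ j = 0) →
      (∀ j : ℕ × ℕ, 2 ≤ j.1 + j.2 → b₂ j = 0) → False := by
    intro hsup₁ hsup₂
    have hsum1 : (∑' j : ℕ × ℕ, if j = (1, 0) then 0 else b₁ j) = b₁ (0, 0) + b₁ (0, 1) := by
      rw [tsum_eq_sum (s := {((0:ℕ), (0:ℕ)), ((0:ℕ), (1:ℕ))}) ?_]
      · rw [Finset.sum_pair (by decide)]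
        rw [if_neg (by decide), if_neg (by decide)]
      · intro j hj
        simp only [Finset.mem_insert, Finset.mem_singleton] at hj
        push_neg at hj
        by_cases hje : j = (1, 0)
        · simp [hje]
        · have hdeg : 2 ≤ j.1 + j.2 := by
            refine deg_classify j.1 j.2 ?_ ?_ ?_
            · intro ⟨ha, hc⟩; exact hj.1 (Prod.ext ha hc)
            · intro ⟨ha, hc⟩; exact hje (Prod.ext ha hc)
            · intro ⟨ha, hc⟩; exact hj.2 (Prod.ext ha hc)
          simp [hje, hsup₁ j hdeg]
    have hsum2 : (∑' j : ℕ × ℕ, if j = (0, 1) then 0 else b₂ j) = b₂ (0, 0) + b₂ (1, 0) := by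
      rw [tsum_eq_sum (s := {((0:ℕ), (0:ℕ)), ((1:ℕ), (0:ℕ))}) ?_]
      · rw [Finset.sum_pair (by decide)]
        rw [if_neg (by decide), if_neg (by decide)]
      · intro j hj
        simp only [Finset.mem_insert, Finset.mem_singleton] at hj
        push_neg at hj
        by_cases hje : j = (0, 1)
        · simp [hje]
        · have hdeg : 2 ≤ j.1 + j.2 := by
            refine deg_classify j.1 j.2 ?_ ?_ ?_
            · intro ⟨ha, hc⟩; exact hj.1 (Prod.ext ha hc)
            · intro ⟨ha, hc⟩; exact hj.2 (Prod.ext ha hc)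
            · intro ⟨ha, hc⟩; exact hje (Prod.ext ha hc)
          simp [hje, hsup₂ j hdeg]
    have hb10 : b₁ (1, 0) = -(b₁ (0, 0) + b₁ (0, 1)) := by rw [he₁, hsum1]
    have hb01 : b₂ (0, 1) = -(b₂ (0, 0) + b₂ (1, 0)) := by rw [he₂, hsum2]
    have hM00v : jacMat b₁ b₂ (1, 1) 0 0 = b₁ (1, 0) := by
      rw [hM00, tsum_eq_single ((1:ℕ), (0:ℕ)) ?_]
      · norm_num
      · intro j hj
        by_cases h0 : j.1 = 0
        · simp [h0]
        · have hdeg : 2 ≤ j.1 + j.2 := by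
            refine deg_classify j.1 j.2 ?_ ?_ ?_
            · intro ⟨ha, hc⟩; exact h0 ha
            · intro ⟨ha, hc⟩; exact hj (Prod.ext ha hc)
            · intro ⟨ha, hc⟩; exact h0 ha
          simp [hsup₁ j hdeg]
    have hM01v : jacMat b₁ b₂ (1, 1) 0 1 = b₁ (0, 1) := by
      rw [hM01, tsum_eq_single ((0:ℕ), (1:ℕ)) ?_]
      · norm_num
      · intro j hj
        by_cases h0 : j.2 = 0
        · simp [h0]
        · have hdeg : 2 ≤ j.1 + j.2 := by
            refine deg_classify j.1 j.2 ?_ ?_ ?_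
            · intro ⟨ha, hc⟩; exact h0 hc
            · intro ⟨ha, hc⟩; exact h0 hc
            · intro ⟨ha, hc⟩; exact hj (Prod.ext ha hc)
          simp [hsup₁ j hdeg]
    have hM10v : jacMat b₁ b₂ (1, 1) 1 0 = b₂ (1, 0) := by
      rw [hM10, tsum_eq_single ((1:ℕ), (0:ℕ)) ?_]
      · norm_num
      · intro j hj
        by_cases h0 : j.1 = 0
        · simp [h0]
        · have hdeg : 2 ≤ j.1 + j.2 := by
            refine deg_classify j.1 j.2 ?_ ?_ ?_
            · intro ⟨ha, hc⟩; exact h0 ha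
            · intro ⟨ha, hc⟩; exact hj (Prod.ext ha hc)
            · intro ⟨ha, hc⟩; exact h0 ha
          simp [hsup₂ j hdeg]
    have hM11v : jacMat b₁ b₂ (1, 1) 1 1 = b₂ (0, 1) := by
      rw [hM11, tsum_eq_single ((0:ℕ), (1:ℕ)) ?_]
      · norm_num
      · intro j hj
        by_cases h0 : j.2 = 0
        · simp [h0]
        · have hdeg : 2 ≤ j.1 + j.2 := by
            refine deg_classify j.1 j.2 ?_ ?_ ?_
            · intro ⟨ha, hc⟩; exact h0 hc
            · intro ⟨ha, hc⟩; exact h0 hc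
            · intro ⟨ha, hc⟩; exact hj (Prod.ext ha hc)
          simp [hsup₂ j hdeg]
    refine noPos (jacMat b₁ b₂ (1, 1)) hM01pos hM10pos ?_ ?_ m hm
    · rw [hM00v, hM01v, hb10]
      have := hb₁ (0, 0) (by decide)
      linarith
    · rw [hM10v, hM11v, hb01]
      have := hb₂ (0, 0) (by decide)
      linarith
  -- the uniqueness of solutions different from (1,1)
  have hmem : ∀ x : ℝ × ℝ, x ∈ {x : ℝ × ℝ | x ∈ Set.Icc ((0 : ℝ), (0 : ℝ)) (1, 1) ∧
      genFun b₁ x = 0 ∧ genFun b₂ x = 0} →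
      0 ≤ x.1 ∧ 0 ≤ x.2 ∧ x.1 ≤ 1 ∧ x.2 ≤ 1 ∧ genFun b₁ x = 0 ∧ genFun b₂ x = 0 := by
    intro x hx
    obtain ⟨hicc, h1, h2⟩ := hx
    rw [Set.mem_Icc] at hicc
    exact ⟨hicc.1.1, hicc.1.2, hicc.2.1, hicc.2.2, h1, h2⟩
  have hlt1 : ∀ x : ℝ × ℝ, (0 ≤ x.1 ∧ 0 ≤ x.2 ∧ x.1 ≤ 1 ∧ x.2 ≤ 1 ∧
      genFun b₁ x = 0 ∧ genFun b₂ x = 0) → x ≠ ((1:ℝ), (1:ℝ)) → x.1 < 1 ∧ x.2 < 1 := by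
    rintro x ⟨hx0, hy0, hx1, hy1, hg1, hg2⟩ hxne
    by_cases h1 : x.1 = 1
    · exfalso
      by_cases h2 : x.2 = 1
      · exact hxne (Prod.ext h1 h2)
      · have hy1' : x.2 < 1 := lt_of_le_of_ne hy1 h2
        have hneg := hedge1 x.2 hy0 hy1'
        rw [show ((1:ℝ), x.2) = x from Prod.ext h1.symm rfl] at hneg
        exact absurd hg1 hneg.ne
    · have h1' : x.1 < 1 := lt_of_le_of_ne hx1 h1
      refine ⟨h1', ?_⟩
      by_cases h2 : x.2 = 1
      · exfalso
        have hneg := hedge2 x.1 hx0 h1'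
        rw [show (x.1, (1:ℝ)) = x from Prod.ext rfl h2.symm] at hneg
        exact absurd hg2 hneg.ne
      · exact lt_of_le_of_ne hy1 h2
  have huniq : ∀ s : ℝ × ℝ, (0 ≤ s.1 ∧ 0 ≤ s.2 ∧ s.1 ≤ 1 ∧ s.2 ≤ 1 ∧
      genFun b₁ s = 0 ∧ genFun b₂ s = 0) →
      ∀ t : ℝ × ℝ, (0 ≤ t.1 ∧ 0 ≤ t.2 ∧ t.1 ≤ 1 ∧ t.2 ≤ 1 ∧
      genFun b₁ t = 0 ∧ genFun b₂ t = 0) →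
      s ≠ ((1:ℝ), (1:ℝ)) → t ≠ ((1:ℝ), (1:ℝ)) → s = t := by
    intro s hsP t htP hs1 ht1
    by_contra hst
    obtain ⟨hs0, hs0', hsle, hsle', hgs1, hgs2⟩ := hsP
    obtain ⟨ht0, ht0', htle, htle', hgt1, hgt2⟩ := htP
    obtain ⟨hslt1, hslt2⟩ := hlt1 s ⟨hs0, hs0', hsle, hsle', hgs1, hgs2⟩ hs1
    obtain ⟨htlt1, htlt2⟩ := hlt1 t ⟨ht0, ht0', htle, htle', hgt1, hgt2⟩ ht1
    rcases le_or_gt s.1 t.1 with h1 | h1 <;> rcases le_or_gt s.2 t.2 with h2 | h2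
    · exact key_lemma b₁ b₂ hb₁ hb₂ habs₁ habs₂ h11₁ h11₂ hedge1 hedge2 haff s t
        hs0 hs0' h1 h2 hst htlt1 htlt2 hgs1.le hgs2.le hgt1 hgt2
    · -- s.1 ≤ t.1, t.2 < s.2 : u = (s.1, t.2), compare with s
      have hFu1 : genFun b₁ (s.1, t.2) ≤ 0 := by
        have hmono := genFun_mono_snd b₁ hb₁ habs₁ s.1 t.2 s.2 hs0 hsle ht0' h2.le hsle'
        rw [Prod.mk.eta] at hmono
        linarith [hgs1, hmono]
      have hFu2 : genFun b₂ (s.1, t.2) ≤ 0 := by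
        have hmono := genFun_mono_fst b₂ hb₂ habs₂ s.1 t.1 t.2 hs0 h1 htle ht0' htle'
        rw [Prod.mk.eta] at hmono
        linarith [hgt2, hmono]
      exact key_lemma b₁ b₂ hb₁ hb₂ habs₁ habs₂ h11₁ h11₂ hedge1 hedge2 haff (s.1, t.2) s
        hs0 ht0' le_rfl h2.le (fun h => absurd (congrArg Prod.snd h) h2.ne) hslt1 hslt2
        hFu1 hFu2 hgs1 hgs2
    · -- t.1 < s.1, s.2 ≤ t.2
      rcases eq_or_lt_of_le h2 with h2e | h2s
      · -- s.2 = t.2 : then t ≤ s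
        exact key_lemma b₁ b₂ hb₁ hb₂ habs₁ habs₂ h11₁ h11₂ hedge1 hedge2 haff t s
          ht0 ht0' h1.le (le_of_eq h2e.symm) (Ne.symm hst) hslt1 hslt2 hgt1.le hgt2.le
          hgs1 hgs2
      · -- u = (t.1, s.2), compare with t
        have hFu1 : genFun b₁ (t.1, s.2) ≤ 0 := by
          have hmono := genFun_mono_snd b₁ hb₁ habs₁ t.1 s.2 t.2 ht0 htle hs0' h2 htle'
          rw [Prod.mk.eta] at hmono
          linarith [hgt1, hmono]
        have hFu2 : genFun b₂ (t.1, s.2) ≤ 0 := by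
          have hmono := genFun_mono_fst b₂ hb₂ habs₂ t.1 s.1 s.2 ht0 h1.le hsle hs0' hsle'
          rw [Prod.mk.eta] at hmono
          linarith [hgs2, hmono]
        exact key_lemma b₁ b₂ hb₁ hb₂ habs₁ habs₂ h11₁ h11₂ hedge1 hedge2 haff (t.1, s.2) t
          ht0 hs0' le_rfl h2 (fun h => absurd (congrArg Prod.snd h) h2s.ne) htlt1 htlt2
          hFu1 hFu2 hgt1 hgt2
    · exact key_lemma b₁ b₂ hb₁ hb₂ habs₁ habs₂ h11₁ h11₂ hedge1 hedge2 haff t s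
        ht0 ht0' h1.le h2.le (Ne.symm hst) hslt1 hslt2 hgt1.le hgt2.le hgs1 hgs2
  -- conclude
  by_cases hEx : ∃ p ∈ {x : ℝ × ℝ | x ∈ Set.Icc ((0 : ℝ), (0 : ℝ)) (1, 1) ∧
      genFun b₁ x = 0 ∧ genFun b₂ x = 0}, p ≠ ((1:ℝ), (1:ℝ))
  · obtain ⟨p, hpS, hpne⟩ := hEx
    have hsub : {x : ℝ × ℝ | x ∈ Set.Icc ((0 : ℝ), (0 : ℝ)) (1, 1) ∧
        genFun b₁ x = 0 ∧ genFun b₂ x = 0} ⊆ {p, ((1:ℝ), (1:ℝ))} := by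
      intro x hxS
      by_cases hx : x = ((1:ℝ), (1:ℝ))
      · exact Set.mem_insert_iff.mpr (Or.inr (by simp [hx]))
      · exact Set.mem_insert_iff.mpr
          (Or.inl (huniq x (hmem x hxS) p (hmem p hpS) hx hpne))
    calc {x : ℝ × ℝ | x ∈ Set.Icc ((0 : ℝ), (0 : ℝ)) (1, 1) ∧
        genFun b₁ x = 0 ∧ genFun b₂ x = 0}.encard
        ≤ ({p, ((1:ℝ), (1:ℝ))} : Set (ℝ × ℝ)).encard := Set.encard_mono hsub
      _ ≤ ({((1:ℝ), (1:ℝ))} : Set (ℝ × ℝ)).encard + 1 := Set.encard_insert_le _ _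
      _ ≤ 2 := by rw [Set.encard_singleton]; norm_num
  · push_neg at hEx
    have hsub : {x : ℝ × ℝ | x ∈ Set.Icc ((0 : ℝ), (0 : ℝ)) (1, 1) ∧
        genFun b₁ x = 0 ∧ genFun b₂ x = 0} ⊆ {((1:ℝ), (1:ℝ))} := fun x hx => hEx x hx
    calc {x : ℝ × ℝ | x ∈ Set.Icc ((0 : ℝ), (0 : ℝ)) (1, 1) ∧
        genFun b₁ x = 0 ∧ genFun b₂ x = 0}.encard
        ≤ ({((1:ℝ), (1:ℝ))} : Set (ℝ × ℝ)).encard := Set.encard_mono hsub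
      _ ≤ 2 := by rw [Set.encard_singleton]; norm_num
end

section
/- Let q = (q₁,q₂) be the smallest nonnegative solution in [0,1]² of the system B₁(x) = 0, B₂(x) = 0. Then ρ(q) ≤ 0, i.e. the maximal eigenvalue of the Jacobian matrix (B_{ij}(q))_{i,j=1,2} is at most 0. -/
open scoped BigOperators

namespace SpecAux

def box : Set (ℝ × ℝ) := Set.Icc ((0 : ℝ), (0 : ℝ)) (1, 1)

lemma mem_box {x : ℝ × ℝ} : x ∈ box ↔ 0 ≤ x.1 ∧ 0 ≤ x.2 ∧ x.1 ≤ 1 ∧ x.2 ≤ 1 := by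
  simp only [box, Set.mem_Icc, Prod.le_def]
  constructor
  · rintro ⟨⟨a, b⟩, ⟨c, d⟩⟩; exact ⟨a, b, c, d⟩
  · rintro ⟨a, b, c, d⟩; exact ⟨⟨a, b⟩, ⟨c, d⟩⟩

noncomputable def D11 (b : ℕ × ℕ → ℝ) (x : ℝ × ℝ) : ℝ :=
  ∑' j : ℕ × ℕ, b j * (j.1 : ℝ) * x.1 ^ (j.1 - 1) * x.2 ^ j.2

noncomputable def D12 (b : ℕ × ℕ → ℝ) (x : ℝ × ℝ) : ℝ :=
  ∑' j : ℕ × ℕ, b j * (j.2 : ℝ) * x.1 ^ j.1 * x.2 ^ (j.2 - 1)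

/-- Bernoulli-type inequality. -/
lemma bern1 (a c : ℝ) (ha : 0 ≤ a) (hc : 0 ≤ c) (m : ℕ) :
    a ^ m + (m : ℝ) * c * a ^ (m - 1) ≤ (a + c) ^ m := by
  rcases m with _ | k
  · simp
  · simp only [Nat.add_sub_cancel]
    induction k with
    | zero => simp
    | succ n ih =>
      have h4 : (0:ℝ) ≤ a + c := by linarith
      have hmul := mul_le_mul_of_nonneg_left ih h4
      have h2 : (0:ℝ) ≤ a ^ n := pow_nonneg ha n
      have h3 : (0:ℝ) ≤ a ^ (n+1) := pow_nonneg ha _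
      push_cast
      push_cast at hmul
      have hint : (0:ℝ) ≤ ((n:ℝ)+1) * c * c * a ^ n := by positivity
      have e1 : (a + c) ^ (n+1+1) = (a+c) * (a+c)^(n+1) := by ring
      have e2 : (a+c) * (a^(n+1) + ((n:ℝ)+1)*c*a^n)
          = a^(n+1+1) + ((n:ℝ)+1+1)*c*a^(n+1) + ((n:ℝ)+1)*c*c*a^n := by ring
      linarith

lemma bern2 (a b c d : ℝ) (ha : 0 ≤ a) (hb : 0 ≤ b) (hc : 0 ≤ c) (hd : 0 ≤ d) (m n : ℕ) :
    a ^ m * b ^ n + (c * ((m : ℝ) * a ^ (m - 1) * b ^ n) + d * ((n : ℝ) * a ^ m * b ^ (n - 1)))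
      ≤ (a + c) ^ m * (b + d) ^ n := by
  have h1 := bern1 a c ha hc m
  have h2 := bern1 b d hb hd n
  have hL1 : (0:ℝ) ≤ a ^ m + (m : ℝ) * c * a ^ (m - 1) := by positivity
  have hL2 : (0:ℝ) ≤ b ^ n + (n : ℝ) * d * b ^ (n - 1) := by positivity
  have hR1 : (0:ℝ) ≤ (a + c) ^ m := by positivity
  have hmul := mul_le_mul h1 h2 hL2 hR1
  nlinarith [mul_nonneg (mul_nonneg (mul_nonneg (Nat.cast_nonneg (α := ℝ) m) hc)
      (pow_nonneg ha (m-1))) (mul_nonneg (mul_nonneg (Nat.cast_nonneg (α := ℝ) n) hd)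
      (pow_nonneg hb (n-1)))]

lemma summable_congr_off (f g : ℕ × ℕ → ℝ) (e : ℕ × ℕ)
    (h : ∀ j, j ≠ e → f j = g j) (hg : Summable g) : Summable f := by
  have hf : f = fun j => g j + (if j = e then f e - g e else 0) := by
    funext j
    by_cases hj : j = e
    · subst hj; simp
    · simp [hj, h j hj]
  rw [hf]
  refine hg.add (summable_of_ne_finset_zero (s := {e}) ?_)
  intro j hj
  simp only [Finset.mem_singleton] at hj
  simp [hj]

lemma abspow_le_one {t : ℝ} (h0 : 0 ≤ t) (h1 : t ≤ 1) (n : ℕ) : |t ^ n| ≤ 1 := by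
  rw [abs_of_nonneg (pow_nonneg h0 n)]
  exact pow_le_one₀ h0 h1

section Generic

variable {b : ℕ × ℕ → ℝ} {e : ℕ × ℕ}
variable (hb : ∀ j, j ≠ e → 0 ≤ b j)
variable (hs : Summable fun j : ℕ × ℕ => if j = e then 0 else b j)

include hb hs in
lemma summable_b : Summable b :=
  summable_congr_off b _ e (fun j hj => by simp [hj]) hs

include hb hs in
lemma summable_abs : Summable fun j => |b j| :=
  summable_congr_off _ _ e (fun j hj => by simp [hj, abs_of_nonneg (hb j hj)]) hs

include hb in
lemma summable_abs_mul_fst (hm : Summable fun j : ℕ × ℕ => b j * (j.1 : ℝ)) :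
    Summable fun j : ℕ × ℕ => |b j| * (j.1 : ℝ) :=
  summable_congr_off _ _ e (fun j hj => by rw [abs_of_nonneg (hb j hj)]) hm

include hb in
lemma summable_abs_mul_snd (hm : Summable fun j : ℕ × ℕ => b j * (j.2 : ℝ)) :
    Summable fun j : ℕ × ℕ => |b j| * (j.2 : ℝ) :=
  summable_congr_off _ _ e (fun j hj => by rw [abs_of_nonneg (hb j hj)]) hm

include hb hs in
lemma summable_term {x : ℝ × ℝ} (hx : x ∈ box) :
    Summable fun j : ℕ × ℕ => b j * x.1 ^ j.1 * x.2 ^ j.2 := by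
  obtain ⟨h1, h2, h3, h4⟩ := mem_box.mp hx
  refine Summable.of_norm_bounded (summable_abs hb hs) fun j => ?_
  rw [Real.norm_eq_abs, abs_mul, abs_mul]
  calc |b j| * |x.1 ^ j.1| * |x.2 ^ j.2| ≤ |b j| * 1 * 1 := by
        refine mul_le_mul (mul_le_mul le_rfl (abspow_le_one h1 h3 _) (abs_nonneg _)
          (abs_nonneg _)) (abspow_le_one h2 h4 _) (abs_nonneg _)
          (by positivity)
    _ = |b j| := by ring

include hb in
lemma summable_d11 (hm : Summable fun j : ℕ × ℕ => b j * (j.1 : ℝ)) {x : ℝ × ℝ} (hx : x ∈ box) :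
    Summable fun j : ℕ × ℕ => b j * (j.1 : ℝ) * x.1 ^ (j.1 - 1) * x.2 ^ j.2 := by
  obtain ⟨h1, h2, h3, h4⟩ := mem_box.mp hx
  refine Summable.of_norm_bounded (summable_abs_mul_fst hb hm) fun j => ?_
  rw [Real.norm_eq_abs, abs_mul, abs_mul, abs_mul, Nat.abs_cast]
  calc |b j| * (j.1 : ℝ) * |x.1 ^ (j.1-1)| * |x.2 ^ j.2| ≤ |b j| * (j.1:ℝ) * 1 * 1 := by
        refine mul_le_mul (mul_le_mul le_rfl (abspow_le_one h1 h3 _) (abs_nonneg _)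
          (by positivity)) (abspow_le_one h2 h4 _) (abs_nonneg _) (by positivity)
    _ = |b j| * (j.1:ℝ) := by ring

include hb in
lemma summable_d12 (hm : Summable fun j : ℕ × ℕ => b j * (j.2 : ℝ)) {x : ℝ × ℝ} (hx : x ∈ box) :
    Summable fun j : ℕ × ℕ => b j * (j.2 : ℝ) * x.1 ^ j.1 * x.2 ^ (j.2 - 1) := by
  obtain ⟨h1, h2, h3, h4⟩ := mem_box.mp hx
  refine Summable.of_norm_bounded (summable_abs_mul_snd hb hm) fun j => ?_
  rw [Real.norm_eq_abs, abs_mul, abs_mul, abs_mul, Nat.abs_cast]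
  calc |b j| * (j.2 : ℝ) * |x.1 ^ j.1| * |x.2 ^ (j.2-1)| ≤ |b j| * (j.2:ℝ) * 1 * 1 := by
        refine mul_le_mul (mul_le_mul le_rfl (abspow_le_one h1 h3 _) (abs_nonneg _)
          (by positivity)) (abspow_le_one h2 h4 _) (abs_nonneg _) (by positivity)
    _ = |b j| * (j.2:ℝ) := by ring

/-- Split a weighted sum over the distinguished index. -/
lemma tsum_split (b : ℕ × ℕ → ℝ) (e : ℕ × ℕ) (g : ℕ × ℕ → ℝ)
    (hsg : Summable fun j => (if j = e then 0 else b j) * g j) :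
    ∑' j, b j * g j = (∑' j, (if j = e then 0 else b j) * g j) + b e * g e := by
  have hterm : ∀ j, b j * g j
      = (if j = e then 0 else b j) * g j + (if j = e then b e * g e else 0) := by
    intro j
    by_cases hj : j = e
    · subst hj; simp
    · simp [hj]
  rw [tsum_congr hterm, Summable.tsum_add hsg (summable_of_ne_finset_zero (s := {e})
    (by intro j hj; simp only [Finset.mem_singleton] at hj; simp [hj])), tsum_ite_eq]

end Generic

/-- Three-factor split of a weighted sum over the distinguished index. -/
lemma tsum_split3 (b : ℕ × ℕ → ℝ) (e : ℕ × ℕ) (g h : ℕ × ℕ → ℝ)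
    (hsg : Summable fun j => (if j = e then 0 else b j) * g j * h j) :
    ∑' j, b j * g j * h j
      = (∑' j, (if j = e then 0 else b j) * g j * h j) + b e * g e * h e := by
  have hterm : ∀ j, b j * g j * h j
      = (if j = e then 0 else b j) * g j * h j + (if j = e then b e * g e * h e else 0) := by
    intro j
    by_cases hj : j = e
    · subst hj; simp
    · simp [hj]
  rw [tsum_congr hterm, Summable.tsum_add hsg (summable_of_ne_finset_zero (s := {e})
    (by intro j hj; simp only [Finset.mem_singleton] at hj; simp [hj])), tsum_ite_eq]

noncomputable def Pf (b : ℕ × ℕ → ℝ) (e : ℕ × ℕ) (x : ℝ × ℝ) : ℝ :=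
  ∑' j : ℕ × ℕ, (if j = e then 0 else b j) * x.1 ^ j.1 * x.2 ^ j.2

section Generic2

variable {b : ℕ × ℕ → ℝ} {e : ℕ × ℕ}
variable (hb : ∀ j, j ≠ e → 0 ≤ b j)
variable (hs : Summable fun j : ℕ × ℕ => if j = e then 0 else b j)

include hb in
lemma ite_nonneg : ∀ j, 0 ≤ (if j = e then 0 else b j) := by
  intro j
  by_cases hj : j = e
  · simp [hj]
  · simp only [hj, if_false]; exact hb j hj

include hb hs in
lemma summable_Pterm {x : ℝ × ℝ} (hx : x ∈ box) :
    Summable fun j : ℕ × ℕ => (if j = e then 0 else b j) * x.1 ^ j.1 * x.2 ^ j.2 := by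
  refine summable_term (b := fun j => if j = e then 0 else b j) (e := e)
    (fun j hj => by simp [hj, hb j hj]) ?_ hx
  exact hs.congr fun j => by by_cases hj : j = e <;> simp [hj]

include hb hs in
lemma tsum_coeff_zero (hee : b e = -∑' j : ℕ × ℕ, if j = e then 0 else b j) :
    ∑' j, b j = 0 := by
  have h0 : Summable fun j => (if j = e then 0 else b j) * 1 * 1 := by
    refine hs.congr fun j => by ring
  have := tsum_split3 b e (fun _ => 1) (fun _ => 1) h0
  simp only [mul_one] at this
  rw [this]
  have : (∑' j, if j = e then (0:ℝ) else b j) = -b e := by rw [hee]; ring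
  rw [this] ; ring

include hb hs in
lemma genFun_split {x : ℝ × ℝ} (hx : x ∈ box) :
    genFun b x = Pf b e x + b e * x.1 ^ e.1 * x.2 ^ e.2 := by
  have h0 : Summable fun j => (if j = e then 0 else b j) * x.1 ^ j.1 * x.2 ^ j.2 :=
    summable_Pterm hb hs hx
  exact tsum_split3 b e (fun j => x.1 ^ j.1) (fun j => x.2 ^ j.2) h0

include hb hs in
lemma Pf_nonneg {x : ℝ × ℝ} (hx : x ∈ box) : 0 ≤ Pf b e x := by
  obtain ⟨h1, h2, _, _⟩ := mem_box.mp hx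
  refine tsum_nonneg fun j => ?_
  have := ite_nonneg (b := b) (e := e) hb j
  positivity

include hb hs in
lemma Pf_mono {x y : ℝ × ℝ} (hx : x ∈ box) (hy : y ∈ box) (hxy : x ≤ y) :
    Pf b e x ≤ Pf b e y := by
  obtain ⟨hx1, hx2, hx3, hx4⟩ := mem_box.mp hx
  obtain ⟨hy1, hy2, hy3, hy4⟩ := mem_box.mp hy
  refine Summable.tsum_le_tsum (fun j => ?_) (summable_Pterm hb hs hx) (summable_Pterm hb hs hy)
  have hc := ite_nonneg (b := b) (e := e) hb j
  refine mul_le_mul (mul_le_mul le_rfl (pow_le_pow_left₀ hx1 hxy.1 _)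
    (by positivity) hc) (pow_le_pow_left₀ hx2 hxy.2 _) (by positivity) ?_
  have : (0:ℝ) ≤ y.1 ^ j.1 := by positivity
  positivity

include hb hs in
lemma Pf_one (hee : b e = -∑' j : ℕ × ℕ, if j = e then 0 else b j) :
    Pf b e (1, 1) = -b e := by
  unfold Pf
  simp only [one_pow, mul_one]
  rw [hee]; ring_nf

include hb hs in
lemma contOn_Pf : ContinuousOn (Pf b e) box := by
  rw [continuousOn_iff_continuous_restrict]
  show Continuous fun x : box =>
    ∑' j : ℕ × ℕ, (if j = e then 0 else b j) * (x : ℝ × ℝ).1 ^ j.1 * (x : ℝ × ℝ).2 ^ j.2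
  refine continuous_tsum (fun j => by fun_prop)
    (hs.congr fun j => (abs_of_nonneg (ite_nonneg hb j)).symm) ?_
  intro j x
  obtain ⟨h1, h2, h3, h4⟩ := mem_box.mp x.2
  have hc := ite_nonneg (b := b) (e := e) hb j
  rw [Real.norm_eq_abs, abs_mul, abs_mul]
  calc |if j = e then 0 else b j| * |(x:ℝ×ℝ).1 ^ j.1| * |(x:ℝ×ℝ).2 ^ j.2|
      ≤ |if j = e then 0 else b j| * 1 * 1 := by
        refine mul_le_mul (mul_le_mul le_rfl (abspow_le_one h1 h3 _) (abs_nonneg _)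
          (abs_nonneg _)) (abspow_le_one h2 h4 _) (abs_nonneg _) (by positivity)
    _ = _ := by rw [abs_of_nonneg hc]; ring

include hb hs in
lemma contOn_genFun : ContinuousOn (genFun b) box := by
  rw [continuousOn_iff_continuous_restrict]
  show Continuous fun x : box =>
    ∑' j : ℕ × ℕ, b j * (x : ℝ × ℝ).1 ^ j.1 * (x : ℝ × ℝ).2 ^ j.2
  refine continuous_tsum (fun j => by fun_prop) (summable_abs hb hs) ?_
  intro j x
  obtain ⟨h1, h2, h3, h4⟩ := mem_box.mp x.2
  rw [Real.norm_eq_abs, abs_mul, abs_mul]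
  calc |b j| * |(x:ℝ×ℝ).1 ^ j.1| * |(x:ℝ×ℝ).2 ^ j.2| ≤ |b j| * 1 * 1 := by
        refine mul_le_mul (mul_le_mul le_rfl (abspow_le_one h1 h3 _) (abs_nonneg _)
          (abs_nonneg _)) (abspow_le_one h2 h4 _) (abs_nonneg _) (by positivity)
    _ = |b j| := by ring

include hb in
lemma contOn_D11 (hm : Summable fun j : ℕ × ℕ => b j * (j.1 : ℝ)) :
    ContinuousOn (D11 b) box := by
  rw [continuousOn_iff_continuous_restrict]
  show Continuous fun x : box =>
    ∑' j : ℕ × ℕ, b j * (j.1 : ℝ) * (x : ℝ × ℝ).1 ^ (j.1 - 1) * (x : ℝ × ℝ).2 ^ j.2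
  refine continuous_tsum (fun j => by fun_prop) (summable_abs_mul_fst hb hm) ?_
  intro j x
  obtain ⟨h1, h2, h3, h4⟩ := mem_box.mp x.2
  rw [Real.norm_eq_abs, abs_mul, abs_mul, abs_mul, Nat.abs_cast]
  calc |b j| * (j.1 : ℝ) * |(x:ℝ×ℝ).1 ^ (j.1-1)| * |(x:ℝ×ℝ).2 ^ j.2|
      ≤ |b j| * (j.1:ℝ) * 1 * 1 := by
        refine mul_le_mul (mul_le_mul le_rfl (abspow_le_one h1 h3 _) (abs_nonneg _)
          (by positivity)) (abspow_le_one h2 h4 _) (abs_nonneg _) (by positivity)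
    _ = |b j| * (j.1:ℝ) := by ring

include hb in
lemma contOn_D12 (hm : Summable fun j : ℕ × ℕ => b j * (j.2 : ℝ)) :
    ContinuousOn (D12 b) box := by
  rw [continuousOn_iff_continuous_restrict]
  show Continuous fun x : box =>
    ∑' j : ℕ × ℕ, b j * (j.2 : ℝ) * (x : ℝ × ℝ).1 ^ j.1 * (x : ℝ × ℝ).2 ^ (j.2 - 1)
  refine continuous_tsum (fun j => by fun_prop) (summable_abs_mul_snd hb hm) ?_
  intro j x
  obtain ⟨h1, h2, h3, h4⟩ := mem_box.mp x.2
  rw [Real.norm_eq_abs, abs_mul, abs_mul, abs_mul, Nat.abs_cast]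
  calc |b j| * (j.2 : ℝ) * |(x:ℝ×ℝ).1 ^ j.1| * |(x:ℝ×ℝ).2 ^ (j.2-1)|
      ≤ |b j| * (j.2:ℝ) * 1 * 1 := by
        refine mul_le_mul (mul_le_mul le_rfl (abspow_le_one h1 h3 _) (abs_nonneg _)
          (by positivity)) (abspow_le_one h2 h4 _) (abs_nonneg _) (by positivity)
    _ = |b j| * (j.2:ℝ) := by ring

include hb in
lemma D11_nonneg_of (he1 : e.1 = 0) {x : ℝ × ℝ} (hx : x ∈ box) : 0 ≤ D11 b x := by
  obtain ⟨h1, h2, _, _⟩ := mem_box.mp hx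
  refine tsum_nonneg fun j => ?_
  by_cases hj : j = e
  · subst hj; simp [he1]
  · have := hb j hj; positivity

include hb in
lemma D12_nonneg_of (he2 : e.2 = 0) {x : ℝ × ℝ} (hx : x ∈ box) : 0 ≤ D12 b x := by
  obtain ⟨h1, h2, _, _⟩ := mem_box.mp hx
  refine tsum_nonneg fun j => ?_
  by_cases hj : j = e
  · subst hj; simp [he2]
  · have := hb j hj; positivity

include hb hs in
/-- The key convexity inequality. -/
lemma key_ineq (he : e = (1, 0) ∨ e = (0, 1))
    (hm1 : Summable fun j : ℕ × ℕ => b j * (j.1 : ℝ))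
    (hm2 : Summable fun j : ℕ × ℕ => b j * (j.2 : ℝ))
    (x w : ℝ × ℝ) (hx : x ∈ box) (hxw : (x.1 + w.1, x.2 + w.2) ∈ box)
    (hw1 : 0 ≤ w.1) (hw2 : 0 ≤ w.2) :
    genFun b x + (w.1 * D11 b x + w.2 * D12 b x)
      ≤ genFun b (x.1 + w.1, x.2 + w.2) := by
  obtain ⟨h1, h2, h3, h4⟩ := mem_box.mp hx
  have hS0 := summable_term hb hs hx
  have hS1 := summable_d11 hb hm1 hx
  have hS2 := summable_d12 hb hm2 hx
  have hS0' := summable_term hb hs hxw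
  have hLHS : genFun b x + (w.1 * D11 b x + w.2 * D12 b x)
      = ∑' j : ℕ × ℕ, (b j * x.1 ^ j.1 * x.2 ^ j.2
        + (w.1 * (b j * (j.1 : ℝ) * x.1 ^ (j.1 - 1) * x.2 ^ j.2)
          + w.2 * (b j * (j.2 : ℝ) * x.1 ^ j.1 * x.2 ^ (j.2 - 1)))) := by
    rw [Summable.tsum_add hS0 ((hS1.mul_left w.1).add (hS2.mul_left w.2)),
      Summable.tsum_add (hS1.mul_left w.1) (hS2.mul_left w.2), tsum_mul_left, tsum_mul_left]
    rfl
  rw [hLHS]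
  refine Summable.tsum_le_tsum (fun j => ?_) (hS0.add ((hS1.mul_left w.1).add (hS2.mul_left w.2))) hS0'
  by_cases hj : j = e
  · subst hj
    rcases he with rfl | rfl
    · simp only
      norm_num
      exact le_of_eq (by ring)
    · simp only
      norm_num
      exact le_of_eq (by ring)
  · have hbj := hb j hj
    have hber := bern2 x.1 x.2 w.1 w.2 h1 h2 hw1 hw2 j.1 j.2
    have := mul_le_mul_of_nonneg_left hber hbj
    calc b j * x.1 ^ j.1 * x.2 ^ j.2
        + (w.1 * (b j * (j.1 : ℝ) * x.1 ^ (j.1 - 1) * x.2 ^ j.2)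
          + w.2 * (b j * (j.2 : ℝ) * x.1 ^ j.1 * x.2 ^ (j.2 - 1)))
        = b j * (x.1 ^ j.1 * x.2 ^ j.2
          + (w.1 * ((j.1 : ℝ) * x.1 ^ (j.1 - 1) * x.2 ^ j.2)
            + w.2 * ((j.2 : ℝ) * x.1 ^ j.1 * x.2 ^ (j.2 - 1)))) := by ring
      _ ≤ b j * ((x.1 + w.1) ^ j.1 * (x.2 + w.2) ^ j.2) := this
      _ = b j * (x.1 + w.1) ^ j.1 * (x.2 + w.2) ^ j.2 := by ring

end Generic2

lemma one_one_mem_box : ((1:ℝ), (1:ℝ)) ∈ box :=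
  mem_box.mpr ⟨zero_le_one, zero_le_one, le_rfl, le_rfl⟩

lemma zero_mem_box : ((0:ℝ), (0:ℝ)) ∈ box :=
  mem_box.mpr ⟨le_rfl, le_rfl, zero_le_one, zero_le_one⟩

/-- The contradiction engine: a nonnegative direction `v` along which the
system can be strictly improved contradicts minimality of `q`. -/
lemma engine (b₁ b₂ : ℕ × ℕ → ℝ)
    (hb₁ : ∀ j : ℕ × ℕ, j ≠ (1, 0) → 0 ≤ b₁ j)
    (hb₂ : ∀ j : ℕ × ℕ, j ≠ (0, 1) → 0 ≤ b₂ j)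
    (hs₁ : Summable fun j : ℕ × ℕ => if j = (1, 0) then 0 else b₁ j)
    (hs₂ : Summable fun j : ℕ × ℕ => if j = (0, 1) then 0 else b₂ j)
    (he₁ : b₁ (1, 0) = -∑' j : ℕ × ℕ, if j = (1, 0) then 0 else b₁ j)
    (he₂ : b₂ (0, 1) = -∑' j : ℕ × ℕ, if j = (0, 1) then 0 else b₂ j)
    (hm11 : Summable fun j : ℕ × ℕ => b₁ j * (j.1 : ℝ))
    (hm12 : Summable fun j : ℕ × ℕ => b₁ j * (j.2 : ℝ))
    (hm21 : Summable fun j : ℕ × ℕ => b₂ j * (j.1 : ℝ))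
    (hm22 : Summable fun j : ℕ × ℕ => b₂ j * (j.2 : ℝ))
    (hc₁ : 0 < -b₁ (1, 0)) (hc₂ : 0 < -b₂ (0, 1))
    (q : ℝ × ℝ) (hqmem : q ∈ box)
    (hq₁ : genFun b₁ q = 0) (hq₂ : genFun b₂ q = 0)
    (hqmin : ∀ x ∈ box, genFun b₁ x = 0 → genFun b₂ x = 0 → q ≤ x)
    (v₁ v₂ : ℝ) (hv₁ : 0 ≤ v₁) (hv₂ : 0 ≤ v₂) (hvne : 0 < v₁ ∨ 0 < v₂)
    (hqv₁ : 0 < v₁ → 0 < q.1) (hqv₂ : 0 < v₂ → 0 < q.2)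
    (hg1 : 0 < v₁ → 0 < v₁ * D11 b₁ q + v₂ * D12 b₁ q)
    (hg2 : 0 < v₂ → 0 < v₁ * D11 b₂ q + v₂ * D12 b₂ q) : False := by
  obtain ⟨hq10, hq20, hq11, hq21⟩ := mem_box.mp hqmem
  -- a safe scale
  set t₁ : ℝ := if 0 < v₁ then q.1 / (2 * v₁) else 1 with ht₁def
  set t₂ : ℝ := if 0 < v₂ then q.2 / (2 * v₂) else 1 with ht₂def
  have ht₁pos : 0 < t₁ := by
    by_cases h : 0 < v₁
    · have := hqv₁ h
      simp only [ht₁def, h, if_true]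
      positivity
    · simp [ht₁def, h]
  have ht₂pos : 0 < t₂ := by
    by_cases h : 0 < v₂
    · have := hqv₂ h
      simp only [ht₂def, h, if_true]
      positivity
    · simp [ht₂def, h]
  set s₀ : ℝ := min 1 (min t₁ t₂) with hs₀def
  have hs₀pos : 0 < s₀ := lt_min one_pos (lt_min ht₁pos ht₂pos)
  have hbound1 : ∀ s : ℝ, 0 ≤ s → s ≤ s₀ → s * v₁ ≤ q.1 := by
    intro s hs0 hss
    by_cases h : 0 < v₁
    · have hst : s ≤ q.1 / (2 * v₁) := by
        calc s ≤ s₀ := hss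
          _ ≤ min t₁ t₂ := min_le_right _ _
          _ ≤ t₁ := min_le_left _ _
          _ = q.1 / (2 * v₁) := by rw [ht₁def, if_pos h]
      have := mul_le_mul_of_nonneg_right hst h.le
      have heq : q.1 / (2 * v₁) * v₁ = q.1 / 2 := by field_simp
      rw [heq] at this
      linarith
    · have hv0 : v₁ = 0 := le_antisymm (not_lt.mp h) hv₁
      simp [hv0, hq10]
  have hbound2 : ∀ s : ℝ, 0 ≤ s → s ≤ s₀ → s * v₂ ≤ q.2 := by
    intro s hs0 hss
    by_cases h : 0 < v₂
    · have hst : s ≤ q.2 / (2 * v₂) := by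
        calc s ≤ s₀ := hss
          _ ≤ min t₁ t₂ := min_le_right _ _
          _ ≤ t₂ := min_le_right _ _
          _ = q.2 / (2 * v₂) := by rw [ht₂def, if_pos h]
      have := mul_le_mul_of_nonneg_right hst h.le
      have heq : q.2 / (2 * v₂) * v₂ = q.2 / 2 := by field_simp
      rw [heq] at this
      linarith
    · have hv0 : v₂ = 0 := le_antisymm (not_lt.mp h) hv₂
      simp [hv0, hq20]
  set φ : ℝ → ℝ × ℝ := fun s => (q.1 - s * v₁, q.2 - s * v₂) with hφdef
  have hφbox : ∀ s ∈ Set.Icc (0:ℝ) s₀, φ s ∈ box := by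
    rintro s ⟨hs0, hss⟩
    refine mem_box.mpr ⟨?_, ?_, ?_, ?_⟩
    · simpa [hφdef] using sub_nonneg.mpr (hbound1 s hs0 hss)
    · simpa [hφdef] using sub_nonneg.mpr (hbound2 s hs0 hss)
    · have : 0 ≤ s * v₁ := mul_nonneg hs0 hv₁
      show q.1 - s * v₁ ≤ 1
      linarith
    · have : 0 ≤ s * v₂ := mul_nonneg hs0 hv₂
      show q.2 - s * v₂ ≤ 1
      linarith
  have hφcont : Continuous φ := by fun_prop
  have hφ0 : φ 0 = q := by simp [hφdef]
  set g₁ : ℝ × ℝ → ℝ := fun x => v₁ * D11 b₁ x + v₂ * D12 b₁ x with hg₁def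
  set g₂ : ℝ × ℝ → ℝ := fun x => v₁ * D11 b₂ x + v₂ * D12 b₂ x with hg₂def
  have hg₁cont : ContinuousOn g₁ box :=
    (continuousOn_const.mul (contOn_D11 hb₁ hm11)).add
      (continuousOn_const.mul (contOn_D12 hb₁ hm12))
  have hg₂cont : ContinuousOn g₂ box :=
    (continuousOn_const.mul (contOn_D11 hb₂ hm21)).add
      (continuousOn_const.mul (contOn_D12 hb₂ hm22))
  have claim : ∀ (g : ℝ × ℝ → ℝ), ContinuousOn g box → (0 < g q) →
      ∃ δ > 0, ∀ s ∈ Set.Icc (0:ℝ) s₀, |s| < δ → 0 ≤ g (φ s) := by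
    intro g hgc hgq
    have hc : ContinuousWithinAt (g ∘ φ) (Set.Icc (0:ℝ) s₀) 0 :=
      ContinuousOn.continuousWithinAt
        (hgc.comp hφcont.continuousOn (fun s hsI => hφbox s hsI))
        (Set.left_mem_Icc.mpr hs₀pos.le)
    rw [Metric.continuousWithinAt_iff] at hc
    obtain ⟨δ, hδpos, hδ⟩ := hc (g q) hgq
    refine ⟨δ, hδpos, fun s hsI hsδ => ?_⟩
    have hd : dist s 0 < δ := by rw [Real.dist_eq, sub_zero]; exact hsδ
    have := hδ hsI hd
    rw [Real.dist_eq] at this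
    have h2 : (g ∘ φ) 0 = g q := by rw [Function.comp_apply, hφ0]
    rw [h2] at this
    have := abs_lt.mp this
    have h3 : (g ∘ φ) s = g (φ s) := rfl
    linarith [this.1]
  have claim₁ : ∃ δ > 0, ∀ s ∈ Set.Icc (0:ℝ) s₀, |s| < δ → 0 ≤ g₁ (φ s) := by
    by_cases hv : 0 < v₁
    · exact claim g₁ hg₁cont (by rw [hg₁def]; exact hg1 hv)
    · have hv0 : v₁ = 0 := le_antisymm (not_lt.mp hv) hv₁
      refine ⟨1, one_pos, fun s hsI _ => ?_⟩
      have hbx := hφbox s hsI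
      have hD := D12_nonneg_of (e := ((1:ℕ), (0:ℕ))) hb₁ rfl hbx
      rw [hg₁def]
      simp only [hv0, zero_mul, zero_add]
      exact mul_nonneg hv₂ hD
  have claim₂ : ∃ δ > 0, ∀ s ∈ Set.Icc (0:ℝ) s₀, |s| < δ → 0 ≤ g₂ (φ s) := by
    by_cases hv : 0 < v₂
    · exact claim g₂ hg₂cont (by rw [hg₂def]; exact hg2 hv)
    · have hv0 : v₂ = 0 := le_antisymm (not_lt.mp hv) hv₂
      refine ⟨1, one_pos, fun s hsI _ => ?_⟩
      have hbx := hφbox s hsI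
      have hD := D11_nonneg_of (e := ((0:ℕ), (1:ℕ))) hb₂ rfl hbx
      rw [hg₂def]
      simp only [hv0, zero_mul, add_zero]
      exact mul_nonneg hv₁ hD
  obtain ⟨δ₁, hδ₁pos, hδ₁⟩ := claim₁
  obtain ⟨δ₂, hδ₂pos, hδ₂⟩ := claim₂
  set s : ℝ := min s₀ (min (δ₁ / 2) (δ₂ / 2)) with hsdef
  have hspos : 0 < s := lt_min hs₀pos (lt_min (by linarith) (by linarith))
  have hsmem : s ∈ Set.Icc (0:ℝ) s₀ := ⟨hspos.le, min_le_left _ _⟩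
  have habs1 : |s| < δ₁ := by
    rw [abs_of_pos hspos]
    calc s ≤ δ₁ / 2 := le_trans (min_le_right _ _) (min_le_left _ _)
      _ < δ₁ := by linarith
  have habs2 : |s| < δ₂ := by
    rw [abs_of_pos hspos]
    calc s ≤ δ₂ / 2 := le_trans (min_le_right _ _) (min_le_right _ _)
      _ < δ₂ := by linarith
  have hgy₁ : 0 ≤ g₁ (φ s) := hδ₁ s hsmem habs1
  have hgy₂ : 0 ≤ g₂ (φ s) := hδ₂ s hsmem habs2
  set y : ℝ × ℝ := φ s with hydef
  have hybox : y ∈ box := hφbox s hsmem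
  obtain ⟨hy10, hy20, hy11, hy21⟩ := mem_box.mp hybox
  have hy1 : y.1 = q.1 - s * v₁ := rfl
  have hy2 : y.2 = q.2 - s * v₂ := rfl
  have hyq : ((y.1 + s * v₁ : ℝ), (y.2 + s * v₂ : ℝ)) = q := by
    rw [Prod.ext_iff]
    constructor
    · rw [hy1]; ring
    · rw [hy2]; ring
  have hw1 : (0:ℝ) ≤ s * v₁ := mul_nonneg hspos.le hv₁
  have hw2 : (0:ℝ) ≤ s * v₂ := mul_nonneg hspos.le hv₂
  have hkey₁ := key_ineq hb₁ hs₁ (Or.inl rfl) hm11 hm12 y (s * v₁, s * v₂) hybox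
    (by rw [show ((y.1 + (s*v₁, s*v₂).1, y.2 + (s*v₁, s*v₂).2) : ℝ × ℝ)
          = ((y.1 + s * v₁ : ℝ), (y.2 + s * v₂ : ℝ)) from rfl, hyq]; exact hqmem)
    hw1 hw2
  have hkey₂ := key_ineq hb₂ hs₂ (Or.inr rfl) hm21 hm22 y (s * v₁, s * v₂) hybox
    (by rw [show ((y.1 + (s*v₁, s*v₂).1, y.2 + (s*v₁, s*v₂).2) : ℝ × ℝ)
          = ((y.1 + s * v₁ : ℝ), (y.2 + s * v₂ : ℝ)) from rfl, hyq]; exact hqmem)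
    hw1 hw2
  rw [show ((y.1 + (s*v₁, s*v₂).1, y.2 + (s*v₁, s*v₂).2) : ℝ × ℝ)
      = ((y.1 + s * v₁ : ℝ), (y.2 + s * v₂ : ℝ)) from rfl, hyq, hq₁] at hkey₁
  rw [show ((y.1 + (s*v₁, s*v₂).1, y.2 + (s*v₁, s*v₂).2) : ℝ × ℝ)
      = ((y.1 + s * v₁ : ℝ), (y.2 + s * v₂ : ℝ)) from rfl, hyq, hq₂] at hkey₂
  have hBy₁ : genFun b₁ y ≤ 0 := by
    have hring : (s*v₁, s*v₂).1 * D11 b₁ y + (s*v₁, s*v₂).2 * D12 b₁ y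
        = s * (v₁ * D11 b₁ y + v₂ * D12 b₁ y) := by
      show s * v₁ * D11 b₁ y + s * v₂ * D12 b₁ y = _
      ring
    rw [hring] at hkey₁
    have hsg : 0 ≤ s * (v₁ * D11 b₁ y + v₂ * D12 b₁ y) := mul_nonneg hspos.le hgy₁
    linarith
  have hBy₂ : genFun b₂ y ≤ 0 := by
    have hring : (s*v₁, s*v₂).1 * D11 b₂ y + (s*v₁, s*v₂).2 * D12 b₂ y
        = s * (v₁ * D11 b₂ y + v₂ * D12 b₂ y) := by
      show s * v₁ * D11 b₂ y + s * v₂ * D12 b₂ y = _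
      ring
    rw [hring] at hkey₂
    have hsg : 0 ≤ s * (v₁ * D11 b₂ y + v₂ * D12 b₂ y) := mul_nonneg hspos.le hgy₂
    linarith
  have hlt : y.1 < q.1 ∨ y.2 < q.2 := by
    rcases hvne with h | h
    · left; rw [hy1]; have := mul_pos hspos h; linarith
    · right; rw [hy2]; have := mul_pos hspos h; linarith
  -- the monotone iteration
  set c₁ : ℝ := -b₁ (1, 0) with hc₁def
  set c₂ : ℝ := -b₂ (0, 1) with hc₂def
  have hPfgen₁ : ∀ x : ℝ × ℝ, x ∈ box → Pf b₁ (1, 0) x = genFun b₁ x + c₁ * x.1 := by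
    intro x hx
    have h := genFun_split hb₁ hs₁ hx
    simp only [pow_one, pow_zero, mul_one] at h
    rw [hc₁def]
    linarith
  have hPfgen₂ : ∀ x : ℝ × ℝ, x ∈ box → Pf b₂ (0, 1) x = genFun b₂ x + c₂ * x.2 := by
    intro x hx
    have h := genFun_split hb₂ hs₂ hx
    simp only [pow_one, pow_zero, mul_one, one_mul] at h
    rw [hc₂def]
    linarith
  set F : ℝ × ℝ → ℝ × ℝ := fun x => (Pf b₁ (1, 0) x / c₁, Pf b₂ (0, 1) x / c₂) with hFdef
  have hF1 : ∀ x, (F x).1 = Pf b₁ (1, 0) x / c₁ := fun _ => rfl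
  have hF2 : ∀ x, (F x).2 = Pf b₂ (0, 1) x / c₂ := fun _ => rfl
  have hFmono : ∀ x z : ℝ × ℝ, x ∈ box → z ∈ box → x ≤ z → F x ≤ F z := by
    intro x z hx hz hxz
    rw [Prod.le_def, hF1, hF1, hF2, hF2]
    constructor
    · have h := Pf_mono hb₁ hs₁ hx hz hxz
      gcongr
    · have h := Pf_mono hb₂ hs₂ hx hz hxz
      gcongr
  have hFnonneg : ∀ x : ℝ × ℝ, x ∈ box → ((0:ℝ), (0:ℝ)) ≤ F x := by
    intro x hx
    rw [Prod.le_def, hF1, hF2]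
    exact ⟨div_nonneg (Pf_nonneg hb₁ hs₁ hx) hc₁.le,
      div_nonneg (Pf_nonneg hb₂ hs₂ hx) hc₂.le⟩
  have hFone : F ((1:ℝ), (1:ℝ)) = ((1:ℝ), (1:ℝ)) := by
    rw [Prod.ext_iff, hF1, hF2]
    rw [Pf_one hb₁ hs₁ he₁, Pf_one hb₂ hs₂ he₂]
    rw [← hc₁def, ← hc₂def]
    exact ⟨div_self hc₁.ne', div_self hc₂.ne'⟩
  have hFbox : ∀ x : ℝ × ℝ, x ∈ box → F x ∈ box := by
    intro x hx
    obtain ⟨a1, a2, a3, a4⟩ := mem_box.mp hx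
    have hle := hFmono x ((1:ℝ),(1:ℝ)) hx one_one_mem_box (by rw [Prod.le_def]; exact ⟨a3, a4⟩)
    rw [hFone] at hle
    have hge := hFnonneg x hx
    exact mem_box.mpr ⟨hge.1, hge.2, hle.1, hle.2⟩
  have hFley : F y ≤ y := by
    rw [Prod.le_def, hF1, hF2]
    constructor
    · rw [div_le_iff₀ hc₁, hPfgen₁ y hybox]
      have : y.1 * c₁ = c₁ * y.1 := mul_comm _ _
      linarith
    · rw [div_le_iff₀ hc₂, hPfgen₂ y hybox]
      have : y.2 * c₂ = c₂ * y.2 := mul_comm _ _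
      linarith
  set u : ℕ → ℝ × ℝ := fun n => F^[n] ((0:ℝ), (0:ℝ)) with hudef
  have hu0 : u 0 = ((0:ℝ), (0:ℝ)) := rfl
  have huS : ∀ n, u (n + 1) = F (u n) := fun n => Function.iterate_succ_apply' F n _
  have hubox : ∀ n, u n ∈ box := by
    intro n
    induction n with
    | zero => rw [hu0]; exact zero_mem_box
    | succ m ih => rw [huS]; exact hFbox _ ih
  have huley : ∀ n, u n ≤ y := by
    intro n
    induction n with
    | zero => rw [hu0, Prod.le_def]; exact ⟨hy10, hy20⟩
    | succ m ih =>
      rw [huS]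
      exact le_trans (hFmono _ _ (hubox m) hybox ih) hFley
  have humono : ∀ n, u n ≤ u (n + 1) := by
    intro n
    induction n with
    | zero => rw [hu0, huS, hu0]; exact hFnonneg _ zero_mem_box
    | succ m ih =>
      rw [huS, huS]
      exact hFmono _ _ (hubox m) (hubox (m+1)) ih
  have hmono1 : Monotone fun n => (u n).1 := monotone_nat_of_le_succ fun n => (humono n).1
  have hmono2 : Monotone fun n => (u n).2 := monotone_nat_of_le_succ fun n => (humono n).2
  have hbdd1 : BddAbove (Set.range fun n => (u n).1) := by
    refine ⟨y.1, ?_⟩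
    rintro _ ⟨n, rfl⟩
    exact (huley n).1
  have hbdd2 : BddAbove (Set.range fun n => (u n).2) := by
    refine ⟨y.2, ?_⟩
    rintro _ ⟨n, rfl⟩
    exact (huley n).2
  set L₁ : ℝ := ⨆ n, (u n).1 with hL₁def
  set L₂ : ℝ := ⨆ n, (u n).2 with hL₂def
  have hT1 : Filter.Tendsto (fun n => (u n).1) Filter.atTop (nhds L₁) :=
    tendsto_atTop_ciSup hmono1 hbdd1
  have hT2 : Filter.Tendsto (fun n => (u n).2) Filter.atTop (nhds L₂) :=
    tendsto_atTop_ciSup hmono2 hbdd2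
  have hTL : Filter.Tendsto u Filter.atTop (nhds (L₁, L₂)) := by
    have := hT1.prodMk_nhds hT2
    exact this
  have hL1le : L₁ ≤ y.1 := ciSup_le fun n => (huley n).1
  have hL2le : L₂ ≤ y.2 := ciSup_le fun n => (huley n).2
  have hL1ge : (0:ℝ) ≤ L₁ := le_ciSup hbdd1 0
  have hL2ge : (0:ℝ) ≤ L₂ := le_ciSup hbdd2 0
  have hLbox : ((L₁ : ℝ), (L₂ : ℝ)) ∈ box :=
    mem_box.mpr ⟨hL1ge, hL2ge, le_trans hL1le hy11, le_trans hL2le hy21⟩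
  have hFcont : ContinuousOn F box :=
    ContinuousOn.prodMk ((contOn_Pf hb₁ hs₁).div_const c₁) ((contOn_Pf hb₂ hs₂).div_const c₂)
  have hFL : F (L₁, L₂) = (L₁, L₂) := by
    have hwithin : Filter.Tendsto u Filter.atTop (nhdsWithin (L₁, L₂) box) :=
      tendsto_nhdsWithin_iff.mpr ⟨hTL, Filter.Eventually.of_forall hubox⟩
    have h2 : Filter.Tendsto (fun n => F (u n)) Filter.atTop (nhds (F (L₁, L₂))) :=
      (hFcont (L₁, L₂) hLbox).tendsto.comp hwithin
    have h1 : Filter.Tendsto (fun n => F (u n)) Filter.atTop (nhds (L₁, L₂)) := by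
      have heq : (fun n => F (u n)) = fun n => u (n + 1) := funext fun n => (huS n).symm
      rw [heq]
      exact hTL.comp (Filter.tendsto_add_atTop_nat 1)
    exact tendsto_nhds_unique h2 h1
  have hgenL₁ : genFun b₁ (L₁, L₂) = 0 := by
    have h := congrArg Prod.fst hFL
    rw [hF1] at h
    have h2 : Pf b₁ (1, 0) (L₁, L₂) = L₁ * c₁ := (div_eq_iff hc₁.ne').mp h
    have h3 := hPfgen₁ (L₁, L₂) hLbox
    have : c₁ * L₁ = L₁ * c₁ := mul_comm _ _
    rw [h2] at h3
    simp only at h3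
    linarith
  have hgenL₂ : genFun b₂ (L₁, L₂) = 0 := by
    have h := congrArg Prod.snd hFL
    rw [hF2] at h
    have h2 : Pf b₂ (0, 1) (L₁, L₂) = L₂ * c₂ := (div_eq_iff hc₂.ne').mp h
    have h3 := hPfgen₂ (L₁, L₂) hLbox
    have : c₂ * L₂ = L₂ * c₂ := mul_comm _ _
    rw [h2] at h3
    simp only at h3
    linarith
  have hqL := hqmin (L₁, L₂) hLbox hgenL₁ hgenL₂
  rcases hlt with h | h
  · have := hqL.1
    simp only at this
    linarith
  · have := hqL.2
    simp only at this
    linarith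

lemma mem_spectrum_fin_two (M : Matrix (Fin 2) (Fin 2) ℝ) (r : ℝ) :
    r ∈ spectrum ℝ M ↔ (r - M 0 0) * (r - M 1 1) - M 0 1 * M 1 0 = 0 := by
  rw [spectrum.mem_iff, Matrix.isUnit_iff_isUnit_det, isUnit_iff_ne_zero, not_ne_iff,
    Matrix.det_fin_two]
  simp only [Matrix.sub_apply, Matrix.algebraMap_matrix_apply]
  norm_num

lemma D11_at_zero (b : ℕ × ℕ → ℝ) : D11 b ((0:ℝ), (0:ℝ)) = b (1, 0) := by
  show (∑' j : ℕ × ℕ, b j * (j.1 : ℝ) * (0:ℝ) ^ (j.1 - 1) * (0:ℝ) ^ j.2) = b (1, 0)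
  have h := tsum_eq_single (L := SummationFilter.unconditional (ℕ × ℕ)) (f := fun j : ℕ × ℕ => b j * (j.1 : ℝ) * (0:ℝ) ^ (j.1 - 1) * (0:ℝ) ^ j.2)
    ((1:ℕ), (0:ℕ)) ?_
  · rw [h]; norm_num
  · rintro ⟨j1, j2⟩ hne
    simp only
    rcases j2 with _ | j2
    · rcases j1 with _ | (_ | j1)
      · norm_num
      · exact absurd rfl hne
      · rw [show (j1 + 1 + 1) - 1 = j1 + 1 from rfl, zero_pow (Nat.succ_ne_zero j1)]
        ring
    · rw [zero_pow (Nat.succ_ne_zero j2)]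
      ring

lemma D12_at_zero (b : ℕ × ℕ → ℝ) : D12 b ((0:ℝ), (0:ℝ)) = b (0, 1) := by
  show (∑' j : ℕ × ℕ, b j * (j.2 : ℝ) * (0:ℝ) ^ j.1 * (0:ℝ) ^ (j.2 - 1)) = b (0, 1)
  have h := tsum_eq_single (L := SummationFilter.unconditional (ℕ × ℕ)) (f := fun j : ℕ × ℕ => b j * (j.2 : ℝ) * (0:ℝ) ^ j.1 * (0:ℝ) ^ (j.2 - 1))
    ((0:ℕ), (1:ℕ)) ?_
  · rw [h]; norm_num
  · rintro ⟨j1, j2⟩ hne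
    simp only
    rcases j1 with _ | j1
    · rcases j2 with _ | (_ | j2)
      · norm_num
      · exact absurd rfl hne
      · rw [show (j2 + 1 + 1) - 1 = j2 + 1 from rfl, zero_pow (Nat.succ_ne_zero j2)]
        ring
    · rw [zero_pow (Nat.succ_ne_zero j1)]
      ring

lemma coeff_zero_left (b : ℕ × ℕ → ℝ)
    (hbpos : ∀ j : ℕ × ℕ, j ≠ (1, 0) → 0 ≤ b j)
    (x : ℝ × ℝ) (hsum : Summable fun j : ℕ × ℕ => b j * x.1 ^ j.1 * x.2 ^ j.2)
    (hx1 : x.1 = 0) (h2pos : 0 < x.2) (hgen : genFun b x = 0) :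
    ∀ n, b (0, n) = 0 := by
  have hterm : ∀ j : ℕ × ℕ, 0 ≤ b j * x.1 ^ j.1 * x.2 ^ j.2 := by
    intro j
    by_cases hj : j = ((1:ℕ), (0:ℕ))
    · subst hj
      rw [hx1]
      norm_num
    · have hbj := hbpos _ hj
      have h2 := h2pos.le
      have h1 : (0:ℝ) ≤ x.1 := by rw [hx1]
      positivity
  have hzero : ∀ j : ℕ × ℕ, b j * x.1 ^ j.1 * x.2 ^ j.2 = 0 := by
    intro j
    have hle := Summable.le_tsum hsum j fun k _ => hterm k
    rw [show (∑' j : ℕ × ℕ, b j * x.1 ^ j.1 * x.2 ^ j.2) = genFun b x from rfl, hgen] at hle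
    exact le_antisymm hle (hterm j)
  intro n
  have h := hzero (0, n)
  simp only [pow_zero, mul_one, one_mul] at h
  have hpow : x.2 ^ n ≠ 0 := (pow_pos h2pos n).ne'
  exact (mul_eq_zero.mp h).resolve_right hpow

lemma coeff_zero_right (b : ℕ × ℕ → ℝ)
    (hbpos : ∀ j : ℕ × ℕ, j ≠ (0, 1) → 0 ≤ b j)
    (x : ℝ × ℝ) (hsum : Summable fun j : ℕ × ℕ => b j * x.1 ^ j.1 * x.2 ^ j.2)
    (hx2 : x.2 = 0) (h1pos : 0 < x.1) (hgen : genFun b x = 0) :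
    ∀ n, b (n, 0) = 0 := by
  have hterm : ∀ j : ℕ × ℕ, 0 ≤ b j * x.1 ^ j.1 * x.2 ^ j.2 := by
    intro j
    by_cases hj : j = ((0:ℕ), (1:ℕ))
    · subst hj
      rw [hx2]
      norm_num
    · have hbj := hbpos _ hj
      have h1 := h1pos.le
      have h2 : (0:ℝ) ≤ x.2 := by rw [hx2]
      positivity
  have hzero : ∀ j : ℕ × ℕ, b j * x.1 ^ j.1 * x.2 ^ j.2 = 0 := by
    intro j
    have hle := Summable.le_tsum hsum j fun k _ => hterm k
    rw [show (∑' j : ℕ × ℕ, b j * x.1 ^ j.1 * x.2 ^ j.2) = genFun b x from rfl, hgen] at hle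
    exact le_antisymm hle (hterm j)
  intro n
  have h := hzero (n, 0)
  simp only [pow_zero, mul_one, one_mul] at h
  have hpow : x.1 ^ n ≠ 0 := (pow_pos h1pos n).ne'
  exact (mul_eq_zero.mp h).resolve_right hpow

lemma D12_zero_left (b : ℕ × ℕ → ℝ) (x : ℝ × ℝ) (hx1 : x.1 = 0)
    (hb0 : ∀ n, b (0, n) = 0) : D12 b x = 0 := by
  have h : ∀ j : ℕ × ℕ, b j * (j.2 : ℝ) * x.1 ^ j.1 * x.2 ^ (j.2 - 1) = 0 := by
    rintro ⟨j1, j2⟩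
    rcases j1 with _ | j1
    · simp [hb0 j2]
    · rw [hx1, zero_pow (Nat.succ_ne_zero j1)]
      ring
  calc D12 b x = ∑' _j : ℕ × ℕ, (0:ℝ) := tsum_congr h
    _ = 0 := tsum_zero

lemma D11_zero_right (b : ℕ × ℕ → ℝ) (x : ℝ × ℝ) (hx2 : x.2 = 0)
    (hb0 : ∀ n, b (n, 0) = 0) : D11 b x = 0 := by
  have h : ∀ j : ℕ × ℕ, b j * (j.1 : ℝ) * x.1 ^ (j.1 - 1) * x.2 ^ j.2 = 0 := by
    rintro ⟨j1, j2⟩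
    rcases j2 with _ | j2
    · simp [hb0 j1]
    · rw [hx2, zero_pow (Nat.succ_ne_zero j2)]
      ring
  calc D11 b x = ∑' _j : ℕ × ℕ, (0:ℝ) := tsum_congr h
    _ = 0 := tsum_zero

lemma D11_le_tsum_left (b : ℕ × ℕ → ℝ)
    (hbpos : ∀ j : ℕ × ℕ, j ≠ (1, 0) → 0 ≤ b j)
    (x : ℝ × ℝ) (hsd : Summable fun j : ℕ × ℕ => b j * (j.1:ℝ) * x.1 ^ (j.1 - 1) * x.2 ^ j.2)
    (hsb : Summable b)
    (hx1 : x.1 = 0) (h2 : 0 ≤ x.2) (h3 : x.2 ≤ 1) : D11 b x ≤ ∑' j, b j := by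
  refine Summable.tsum_le_tsum (fun j => ?_) hsd hsb
  by_cases hj : j = ((1:ℕ), (0:ℕ))
  · subst hj
    norm_num
  · have hbj := hbpos j hj
    obtain ⟨j1, j2⟩ := j
    have hfac0 : 0 ≤ (j1 : ℝ) * x.1 ^ (j1 - 1) * x.2 ^ j2 := by positivity
    have hfac : (j1 : ℝ) * x.1 ^ (j1 - 1) * x.2 ^ j2 ≤ 1 := by
      rcases j1 with _ | (_ | j1)
      · norm_num
      · have := pow_le_one₀ h2 h3 (n := j2)
        norm_num
        exact this
      · rw [hx1, show (j1 + 1 + 1) - 1 = j1 + 1 from rfl, zero_pow (Nat.succ_ne_zero j1)]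
        norm_num
    calc b (j1, j2) * ((j1, j2).1 : ℝ) * x.1 ^ ((j1, j2).1 - 1) * x.2 ^ (j1, j2).2
        = b (j1, j2) * ((j1 : ℝ) * x.1 ^ (j1 - 1) * x.2 ^ j2) := by ring
      _ ≤ b (j1, j2) * 1 := mul_le_mul_of_nonneg_left hfac hbj
      _ = b (j1, j2) := mul_one _

lemma D12_le_tsum_right (b : ℕ × ℕ → ℝ)
    (hbpos : ∀ j : ℕ × ℕ, j ≠ (0, 1) → 0 ≤ b j)
    (x : ℝ × ℝ) (hsd : Summable fun j : ℕ × ℕ => b j * (j.2:ℝ) * x.1 ^ j.1 * x.2 ^ (j.2 - 1))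
    (hsb : Summable b)
    (hx2 : x.2 = 0) (h1 : 0 ≤ x.1) (h3 : x.1 ≤ 1) : D12 b x ≤ ∑' j, b j := by
  refine Summable.tsum_le_tsum (fun j => ?_) hsd hsb
  by_cases hj : j = ((0:ℕ), (1:ℕ))
  · subst hj
    norm_num
  · have hbj := hbpos j hj
    obtain ⟨j1, j2⟩ := j
    have hfac0 : 0 ≤ (j2 : ℝ) * x.1 ^ j1 * x.2 ^ (j2 - 1) := by positivity
    have hfac : (j2 : ℝ) * x.1 ^ j1 * x.2 ^ (j2 - 1) ≤ 1 := by
      rcases j2 with _ | (_ | j2)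
      · norm_num
      · have := pow_le_one₀ h1 h3 (n := j1)
        norm_num
        exact this
      · rw [hx2, show (j2 + 1 + 1) - 1 = j2 + 1 from rfl, zero_pow (Nat.succ_ne_zero j2)]
        norm_num
    calc b (j1, j2) * ((j1, j2).2 : ℝ) * x.1 ^ (j1, j2).1 * x.2 ^ ((j1, j2).2 - 1)
        = b (j1, j2) * ((j2 : ℝ) * x.1 ^ j1 * x.2 ^ (j2 - 1)) := by ring
      _ ≤ b (j1, j2) * 1 := mul_le_mul_of_nonneg_left hfac hbj
      _ = b (j1, j2) := mul_one _

end SpecAux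

open SpecAux in
theorem spectral_radius_at_q_nonpos (b₁ b₂ : ℕ × ℕ → ℝ)
    (hb₁ : ∀ j : ℕ × ℕ, j ≠ (1, 0) → 0 ≤ b₁ j)
    (hb₂ : ∀ j : ℕ × ℕ, j ≠ (0, 1) → 0 ≤ b₂ j)
    (hs₁ : Summable fun j : ℕ × ℕ => if j = (1, 0) then 0 else b₁ j)
    (hs₂ : Summable fun j : ℕ × ℕ => if j = (0, 1) then 0 else b₂ j)
    (he₁ : b₁ (1, 0) = -∑' j : ℕ × ℕ, if j = (1, 0) then 0 else b₁ j)
    (he₂ : b₂ (0, 1) = -∑' j : ℕ × ℕ, if j = (0, 1) then 0 else b₂ j)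
    (hA2 : (Summable fun j : ℕ × ℕ => b₁ j * (j.1 : ℝ)) ∧
      (Summable fun j : ℕ × ℕ => b₁ j * (j.2 : ℝ)) ∧
      (Summable fun j : ℕ × ℕ => b₂ j * (j.1 : ℝ)) ∧
      (Summable fun j : ℕ × ℕ => b₂ j * (j.2 : ℝ)))
    (hA1 : ¬ ∃ M : Matrix (Fin 2) (Fin 2) ℝ, ∀ x ∈ Set.Icc ((0 : ℝ), (0 : ℝ)) (1, 1),
      genFun b₁ x = x.1 * M 0 0 + x.2 * M 1 0 ∧ genFun b₂ x = x.1 * M 0 1 + x.2 * M 1 1)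
    (hA3 : ∃ m : ℕ, ∀ i j : Fin 2, 0 < ((jacMat b₁ b₂ (1, 1)) ^ m) i j)
    (q : ℝ × ℝ) (hqmem : q ∈ Set.Icc ((0 : ℝ), (0 : ℝ)) (1, 1))
    (hq₁ : genFun b₁ q = 0) (hq₂ : genFun b₂ q = 0)
    (hqmin : ∀ x ∈ Set.Icc ((0 : ℝ), (0 : ℝ)) (1, 1), genFun b₁ x = 0 → genFun b₂ x = 0 → q ≤ x)
    (ρq : ℝ) (hρ : IsGreatest (spectrum ℝ (jacMat b₁ b₂ q)) ρq) :
    ρq ≤ 0 := by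
  classical
  obtain ⟨hm11, hm12, hm21, hm22⟩ := hA2
  by_contra hneg
  push_neg at hneg
  have hqmem' : q ∈ box := hqmem
  have hqmin' : ∀ x ∈ box, genFun b₁ x = 0 → genFun b₂ x = 0 → q ≤ x := hqmin
  obtain ⟨hq10, hq20, hq11, hq21⟩ := mem_box.mp hqmem'
  have hJ00 : jacMat b₁ b₂ q 0 0 = D11 b₁ q := rfl
  have hJ01 : jacMat b₁ b₂ q 0 1 = D12 b₁ q := rfl
  have hJ10 : jacMat b₁ b₂ q 1 0 = D11 b₂ q := rfl
  have hJ11 : jacMat b₁ b₂ q 1 1 = D12 b₂ q := rfl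
  set a : ℝ := D11 b₁ q with hadef
  set bb : ℝ := D12 b₁ q with hbbdef
  set cc : ℝ := D11 b₂ q with hccdef
  set d : ℝ := D12 b₂ q with hddef
  -- positivity of the total rates
  have hc₁ : 0 < -b₁ (1, 0) := by
    have hnn : (0:ℝ) ≤ ∑' j : ℕ × ℕ, if j = ((1:ℕ), (0:ℕ)) then 0 else b₁ j :=
      tsum_nonneg (ite_nonneg hb₁)
    have heq : -b₁ (1, 0) = ∑' j : ℕ × ℕ, if j = ((1:ℕ), (0:ℕ)) then 0 else b₁ j := by
      rw [he₁]; ring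
    rcases hnn.lt_or_eq with h | h
    · rw [heq]; exact h
    · exfalso
      have hz : ∀ j : ℕ × ℕ, b₁ j = 0 := by
        intro j
        by_cases hj : j = ((1:ℕ), (0:ℕ))
        · subst hj; rw [he₁, ← h, neg_zero]
        · have hle := Summable.le_tsum hs₁ j fun k _ => ite_nonneg hb₁ k
          rw [if_neg hj] at hle
          rw [← h] at hle
          exact le_antisymm hle (hb₁ j hj)
      have hrow : ∀ k : Fin 2, jacMat b₁ b₂ ((1:ℝ), (1:ℝ)) 0 k = 0 := by
        intro k
        fin_cases k
        · show (∑' j : ℕ × ℕ, b₁ j * (j.1 : ℝ) * (1:ℝ) ^ (j.1 - 1) * (1:ℝ) ^ j.2) = 0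
          calc _ = ∑' _j : ℕ × ℕ, (0:ℝ) := tsum_congr fun j => by rw [hz j]; ring
            _ = 0 := tsum_zero
        · show (∑' j : ℕ × ℕ, b₁ j * (j.2 : ℝ) * (1:ℝ) ^ j.1 * (1:ℝ) ^ (j.2 - 1)) = 0
          calc _ = ∑' _j : ℕ × ℕ, (0:ℝ) := tsum_congr fun j => by rw [hz j]; ring
            _ = 0 := tsum_zero
      obtain ⟨m, hm3⟩ := hA3
      rcases m with _ | m
      · have h01 := hm3 0 1
        rw [pow_zero, Matrix.one_apply_ne (by decide : (0 : Fin 2) ≠ 1)] at h01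
        exact lt_irrefl 0 h01
      · have h00 := hm3 0 0
        rw [pow_succ', Matrix.mul_apply] at h00
        rw [Finset.sum_eq_zero fun k _ => by rw [hrow k, zero_mul]] at h00
        exact lt_irrefl 0 h00
  have hc₂ : 0 < -b₂ (0, 1) := by
    have hnn : (0:ℝ) ≤ ∑' j : ℕ × ℕ, if j = ((0:ℕ), (1:ℕ)) then 0 else b₂ j :=
      tsum_nonneg (ite_nonneg hb₂)
    have heq : -b₂ (0, 1) = ∑' j : ℕ × ℕ, if j = ((0:ℕ), (1:ℕ)) then 0 else b₂ j := by
      rw [he₂]; ring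
    rcases hnn.lt_or_eq with h | h
    · rw [heq]; exact h
    · exfalso
      have hz : ∀ j : ℕ × ℕ, b₂ j = 0 := by
        intro j
        by_cases hj : j = ((0:ℕ), (1:ℕ))
        · subst hj; rw [he₂, ← h, neg_zero]
        · have hle := Summable.le_tsum hs₂ j fun k _ => ite_nonneg hb₂ k
          rw [if_neg hj] at hle
          rw [← h] at hle
          exact le_antisymm hle (hb₂ j hj)
      have hrow : ∀ k : Fin 2, jacMat b₁ b₂ ((1:ℝ), (1:ℝ)) 1 k = 0 := by
        intro k
        fin_cases k
        · show (∑' j : ℕ × ℕ, b₂ j * (j.1 : ℝ) * (1:ℝ) ^ (j.1 - 1) * (1:ℝ) ^ j.2) = 0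
          calc _ = ∑' _j : ℕ × ℕ, (0:ℝ) := tsum_congr fun j => by rw [hz j]; ring
            _ = 0 := tsum_zero
        · show (∑' j : ℕ × ℕ, b₂ j * (j.2 : ℝ) * (1:ℝ) ^ j.1 * (1:ℝ) ^ (j.2 - 1)) = 0
          calc _ = ∑' _j : ℕ × ℕ, (0:ℝ) := tsum_congr fun j => by rw [hz j]; ring
            _ = 0 := tsum_zero
      obtain ⟨m, hm3⟩ := hA3
      rcases m with _ | m
      · have h01 := hm3 1 0
        rw [pow_zero, Matrix.one_apply_ne (by decide : (1 : Fin 2) ≠ 0)] at h01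
        exact lt_irrefl 0 h01
      · have h00 := hm3 1 1
        rw [pow_succ', Matrix.mul_apply] at h00
        rw [Finset.sum_eq_zero fun k _ => by rw [hrow k, zero_mul]] at h00
        exact lt_irrefl 0 h00
  -- characteristic equation and order facts
  have hchar : (ρq - a) * (ρq - d) - bb * cc = 0 := by
    have h := (mem_spectrum_fin_two _ ρq).mp hρ.1
    rw [hJ00, hJ01, hJ10, hJ11] at h
    exact h
  have hother : a + d - ρq ∈ spectrum ℝ (jacMat b₁ b₂ q) := by
    rw [mem_spectrum_fin_two, hJ00, hJ01, hJ10, hJ11]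
    linear_combination hchar
  have htr : a + d - ρq ≤ ρq := hρ.2 hother
  have hbb0 : 0 ≤ bb := by
    rw [hbbdef]
    refine tsum_nonneg fun j => ?_
    by_cases hj : j = ((1:ℕ), (0:ℕ))
    · subst hj; simp
    · have hbj := hb₁ j hj
      exact mul_nonneg (mul_nonneg (mul_nonneg hbj (Nat.cast_nonneg _))
        (pow_nonneg hq10 _)) (pow_nonneg hq20 _)
  have hcc0 : 0 ≤ cc := by
    rw [hccdef]
    refine tsum_nonneg fun j => ?_
    by_cases hj : j = ((0:ℕ), (1:ℕ))
    · subst hj; simp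
    · have hbj := hb₂ j hj
      exact mul_nonneg (mul_nonneg (mul_nonneg hbj (Nat.cast_nonneg _))
        (pow_nonneg hq10 _)) (pow_nonneg hq20 _)
  have haρ : a ≤ ρq := by nlinarith [hchar, htr, mul_nonneg hbb0 hcc0, sq_nonneg (ρq - a), sq_nonneg (ρq - d)]
  have hdρ : d ≤ ρq := by nlinarith [hchar, htr, mul_nonneg hbb0 hcc0, sq_nonneg (ρq - a), sq_nonneg (ρq - d)]
  rcases eq_or_lt_of_le hq10 with hq1z | hq1pos
  · rcases eq_or_lt_of_le hq20 with hq2z | hq2pos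
    · -- q = (0,0)
      have hq0 : q = ((0:ℝ), (0:ℝ)) := Prod.ext_iff.mpr ⟨hq1z.symm, hq2z.symm⟩
      have hav : a = b₁ (1, 0) := by rw [hadef, hq0, D11_at_zero]
      have hbbv : bb = b₁ (0, 1) := by rw [hbbdef, hq0, D12_at_zero]
      have hccv : cc = b₂ (1, 0) := by rw [hccdef, hq0, D11_at_zero]
      have hdv : d = b₂ (0, 1) := by rw [hddef, hq0, D12_at_zero]
      have hbble : bb ≤ -b₁ (1, 0) := by
        rw [hbbv, he₁, neg_neg]
        have hle := Summable.le_tsum hs₁ ((0:ℕ), (1:ℕ)) fun k _ => ite_nonneg hb₁ k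
        rw [if_neg (by decide)] at hle
        exact hle
      have hccle : cc ≤ -b₂ (0, 1) := by
        rw [hccv, he₂, neg_neg]
        have hle := Summable.le_tsum hs₂ ((1:ℕ), (0:ℕ)) fun k _ => ite_nonneg hb₂ k
        rw [if_neg (by decide)] at hle
        exact hle
      have hprod : bb * cc ≤ (-b₁ (1, 0)) * (-b₂ (0, 1)) :=
        mul_le_mul hbble hccle hcc0 hc₁.le
      nlinarith [hchar, hprod, hneg, hc₁, hc₂, hav, hdv,
        mul_pos hneg hc₁, mul_pos hneg hc₂, mul_pos hneg hneg]
    · -- q.1 = 0 < q.2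
      have hq1z' : q.1 = 0 := hq1z.symm
      have hb0 : ∀ n, b₁ (0, n) = 0 :=
        coeff_zero_left b₁ hb₁ q (summable_term hb₁ hs₁ hqmem') hq1z' hq2pos hq₁
      have hbbz : bb = 0 := by rw [hbbdef]; exact D12_zero_left b₁ q hq1z' hb0
      have hale : a ≤ 0 := by
        have h1 := D11_le_tsum_left b₁ hb₁ q (summable_d11 hb₁ hm11 hqmem')
          (summable_b hb₁ hs₁) hq1z' hq20 hq21
        rw [tsum_coeff_zero hb₁ hs₁ he₁, ← hadef] at h1
        exact h1
      have hρd : ρq = d := by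
        rw [hbbz, zero_mul, sub_zero] at hchar
        rcases mul_eq_zero.mp hchar with h | h
        · exfalso; linarith
        · linarith
      refine engine b₁ b₂ hb₁ hb₂ hs₁ hs₂ he₁ he₂ hm11 hm12 hm21 hm22 hc₁ hc₂ q hqmem'
        hq₁ hq₂ hqmin' 0 1 le_rfl zero_le_one (Or.inr one_pos)
        (fun h => absurd h (lt_irrefl 0)) (fun _ => hq2pos)
        (fun h => absurd h (lt_irrefl 0)) (fun _ => ?_)
      rw [← hddef]
      have he : (0:ℝ) * D11 b₂ q + 1 * d = d := by ring
      rw [he, ← hρd]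
      exact hneg
  · rcases eq_or_lt_of_le hq20 with hq2z | hq2pos
    · -- q.2 = 0 < q.1
      have hq2z' : q.2 = 0 := hq2z.symm
      have hb0 : ∀ n, b₂ (n, 0) = 0 :=
        coeff_zero_right b₂ hb₂ q (summable_term hb₂ hs₂ hqmem') hq2z' hq1pos hq₂
      have hccz : cc = 0 := by rw [hccdef]; exact D11_zero_right b₂ q hq2z' hb0
      have hdle : d ≤ 0 := by
        have h1 := D12_le_tsum_right b₂ hb₂ q (summable_d12 hb₂ hm22 hqmem')
          (summable_b hb₂ hs₂) hq2z' hq10 hq11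
        rw [tsum_coeff_zero hb₂ hs₂ he₂, ← hddef] at h1
        exact h1
      have hρa : ρq = a := by
        rw [hccz, mul_zero, sub_zero] at hchar
        rcases mul_eq_zero.mp hchar with h | h
        · linarith
        · exfalso; linarith
      refine engine b₁ b₂ hb₁ hb₂ hs₁ hs₂ he₁ he₂ hm11 hm12 hm21 hm22 hc₁ hc₂ q hqmem'
        hq₁ hq₂ hqmin' 1 0 zero_le_one le_rfl (Or.inl one_pos)
        (fun _ => hq1pos) (fun h => absurd h (lt_irrefl 0))
        (fun _ => ?_) (fun h => absurd h (lt_irrefl 0))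
      rw [← hadef]
      have he : (1:ℝ) * a + 0 * D12 b₁ q = a := by ring
      rw [he, ← hρa]
      exact hneg
    · -- interior case
      by_cases h1 : bb ≠ 0 ∨ ρq ≠ a
      · have hv2 : 0 ≤ ρq - a := by linarith
        have hvne : 0 < bb ∨ 0 < ρq - a := by
          rcases h1 with h | h
          · exact Or.inl (lt_of_le_of_ne hbb0 (Ne.symm h))
          · exact Or.inr (lt_of_le_of_ne hv2 (Ne.symm (sub_ne_zero.mpr h)))
        refine engine b₁ b₂ hb₁ hb₂ hs₁ hs₂ he₁ he₂ hm11 hm12 hm21 hm22 hc₁ hc₂ q hqmem'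
          hq₁ hq₂ hqmin' bb (ρq - a) hbb0 hv2 hvne
          (fun _ => hq1pos) (fun _ => hq2pos) (fun hv => ?_) (fun hv => ?_)
        · rw [← hadef, ← hbbdef]
          have he : bb * a + (ρq - a) * bb = ρq * bb := by ring
          rw [he]
          exact mul_pos hneg hv
        · rw [← hccdef, ← hddef]
          have he : bb * cc + (ρq - a) * d = ρq * (ρq - a) := by linear_combination -hchar
          rw [he]
          exact mul_pos hneg hv
      · push_neg at h1
        obtain ⟨hbz, hρa⟩ := h1
        by_cases h2 : cc ≠ 0 ∨ ρq ≠ d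
        · have hv1 : 0 ≤ ρq - d := by linarith
          have hvne : 0 < ρq - d ∨ 0 < cc := by
            rcases h2 with h | h
            · exact Or.inr (lt_of_le_of_ne hcc0 (Ne.symm h))
            · exact Or.inl (lt_of_le_of_ne hv1 (Ne.symm (sub_ne_zero.mpr h)))
          refine engine b₁ b₂ hb₁ hb₂ hs₁ hs₂ he₁ he₂ hm11 hm12 hm21 hm22 hc₁ hc₂ q hqmem'
            hq₁ hq₂ hqmin' (ρq - d) cc hv1 hcc0 hvne
            (fun _ => hq1pos) (fun _ => hq2pos) (fun hv => ?_) (fun hv => ?_)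
          · rw [← hadef, ← hbbdef]
            have he : (ρq - d) * a + cc * bb = ρq * (ρq - d) := by
              rw [hbz, ← hρa]; ring
            rw [he]
            exact mul_pos hneg hv
          · rw [← hccdef, ← hddef]
            have he : (ρq - d) * cc + cc * d = ρq * cc := by ring
            rw [he]
            exact mul_pos hneg hv
        · push_neg at h2
          obtain ⟨hcz, hρd⟩ := h2
          refine engine b₁ b₂ hb₁ hb₂ hs₁ hs₂ he₁ he₂ hm11 hm12 hm21 hm22 hc₁ hc₂ q hqmem'
            hq₁ hq₂ hqmin' 1 1 zero_le_one zero_le_one (Or.inl one_pos)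
            (fun _ => hq1pos) (fun _ => hq2pos) (fun _ => ?_) (fun _ => ?_)
          · rw [← hadef, ← hbbdef]
            have he : (1:ℝ) * a + 1 * bb = a := by rw [hbz]; ring
            rw [he, ← hρa]
            exact hneg
          · rw [← hccdef, ← hddef]
            have he : (1:ℝ) * cc + 1 * d = d := by rw [hcz]; ring
            rw [he, ← hρd]
            exact hneg
end
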